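/- arXiv:2203.09071 — 10 statements merged into one kernel-verified Lean document; each statement's English description precedes it below -/
import Mathlib

section
/- (Homological Perturbation Lemma.) Given an SDR and a small perturbation δ of it, the perturbed data is again an SDR: b₁² = 0, i₁ and p₁ are cochain maps with respect to b₁ and d₁ = d + δ (i.e. d₁∘i₁ = i₁∘b₁ and b₁∘p₁ = p₁∘d₁), and p₁∘i₁ = 1, i₁∘p₁ = 1 + d₁∘K₁ + K₁∘d₁, p₁∘K₁ = 0, K₁∘i₁ = 0, K₁∘K₁ = 0. -/
private theorem lcomb1 {G : Type*} [AddCommGroup G] {L R X Y : G}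
    (h : L = R) (hid : X - Y = L - R) : X = Y :=
  sub_eq_zero.mp (by rw [hid, h, sub_self])

/-- **Homological Perturbation Lemma.**
Given an SDR `(N, b) ⇄ (M, d)` with maps `i`, `p`, homotopy `K`, and a small
perturbation `δ` (smallness witnessed by a two-sided inverse `E` of `1 - δ ∘ K`),
the perturbed data `b₁ = b + pAi`, `i₁ = i + KAi`, `p₁ = p + pAK`, `K₁ = K + KAK`
(where `A = (1 - δK)⁻¹ δ`) is again an SDR for the perturbed differential `d₁ = d + δ`. -/
theorem homological_perturbation_lemma
    {R N M : Type*} [CommRing R] [AddCommGroup N] [Module R N]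
    [AddCommGroup M] [Module R M]
    -- the SDR
    (b : Module.End R N) (d : Module.End R M)
    (i : N →ₗ[R] M) (p : M →ₗ[R] N) (K : Module.End R M)
    (hb : b ∘ₗ b = 0) (hd : d ∘ₗ d = 0)
    (hdi : d ∘ₗ i = i ∘ₗ b) (hbp : b ∘ₗ p = p ∘ₗ d)
    (hpi : p ∘ₗ i = LinearMap.id)
    (hip : i ∘ₗ p = LinearMap.id + d ∘ₗ K + K ∘ₗ d)
    (hpK : p ∘ₗ K = 0) (hKi : K ∘ₗ i = 0) (hKK : K ∘ₗ K = 0)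
    -- a small perturbation
    (δ : Module.End R M) (hδ : (d + δ) ∘ₗ (d + δ) = 0)
    (E : Module.End R M)
    (hE₁ : (1 - δ ∘ₗ K) ∘ₗ E = 1) (hE₂ : E ∘ₗ (1 - δ ∘ₗ K) = 1)
    -- the perturbed data
    (A : Module.End R M) (hA : A = E ∘ₗ δ)
    (b₁ : Module.End R N) (hb₁ : b₁ = b + p ∘ₗ (A ∘ₗ i))
    (i₁ : N →ₗ[R] M) (hi₁ : i₁ = i + K ∘ₗ (A ∘ₗ i))
    (p₁ : M →ₗ[R] N) (hp₁ : p₁ = p + p ∘ₗ (A ∘ₗ K))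
    (K₁ : Module.End R M) (hK₁ : K₁ = K + K ∘ₗ (A ∘ₗ K))
    (d₁ : Module.End R M) (hd₁ : d₁ = d + δ) :
    b₁ ∘ₗ b₁ = 0 ∧
    d₁ ∘ₗ i₁ = i₁ ∘ₗ b₁ ∧
    b₁ ∘ₗ p₁ = p₁ ∘ₗ d₁ ∧
    p₁ ∘ₗ i₁ = LinearMap.id ∧
    i₁ ∘ₗ p₁ = LinearMap.id + d₁ ∘ₗ K₁ + K₁ ∘ₗ d₁ ∧
    p₁ ∘ₗ K₁ = 0 ∧
    K₁ ∘ₗ i₁ = 0 ∧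
    K₁ ∘ₗ K₁ = 0 := by
  -- pointwise versions of the hypotheses
  have hpi' : ∀ n, p (i n) = n := fun n => by simpa using LinearMap.congr_fun hpi n
  have hip' : ∀ m, i (p m) = m + d (K m) + K (d m) := fun m => by
    simpa using LinearMap.congr_fun hip m
  have hpK' : ∀ m, p (K m) = 0 := fun m => by simpa using LinearMap.congr_fun hpK m
  have hKi' : ∀ n, K (i n) = 0 := fun n => by simpa using LinearMap.congr_fun hKi n
  have hKK' : ∀ m, K (K m) = 0 := fun m => by simpa using LinearMap.congr_fun hKK m
  have hdi' : ∀ n, d (i n) = i (b n) := fun n => by simpa using LinearMap.congr_fun hdi n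
  have hdd : ∀ m, d (d m) = 0 := fun m => by simpa using LinearMap.congr_fun hd m
  have hd₁' : ∀ m, d₁ m = d m + δ m := fun m => by rw [hd₁]; simp
  have hdd₁ : ∀ m, d₁ (d₁ m) = 0 := fun m => by
    rw [hd₁]; simpa using LinearMap.congr_fun hδ m
  -- pointwise versions of the perturbed maps
  have hb₁' : ∀ n, b₁ n = b n + p (E (δ (i n))) := fun n => by
    rw [hb₁, hA]; simp
  have hi₁' : ∀ n, i₁ n = i n + K (E (δ (i n))) := fun n => by
    rw [hi₁, hA]; simp
  have hp₁' : ∀ m, p₁ m = p m + p (E (δ (K m))) := fun m => by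
    rw [hp₁, hA]; simp
  have hK₁' : ∀ m, K₁ m = K m + K (E (δ (K m))) := fun m => by
    rw [hK₁, hA]; simp
  -- the key identities for E
  have F1 : ∀ m, δ (K (E m)) = E m - m := fun m => by
    have h : E m - δ (K (E m)) = m := by simpa using LinearMap.congr_fun hE₁ m
    simpa using congrArg (fun z => E m - z) h
  have F2 : ∀ m, E (δ (K m)) = E m - m := fun m => by
    have h : E m - E (δ (K m)) = m := by simpa using LinearMap.congr_fun hE₂ m
    simpa using congrArg (fun z => E m - z) h
  have F3 : ∀ m, E (K m) = K m := fun m => by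
    have h := F2 (K m)
    rw [hKK' m] at h
    simp only [map_zero] at h
    exact (sub_eq_zero.mp h.symm)
  have F9 : ∀ n, E (i n) = i n := fun n => by
    have h := F2 (i n)
    rw [hKi' n] at h
    simp only [map_zero] at h
    exact (sub_eq_zero.mp h.symm)
  -- simplified forms of the perturbed maps
  have hp₁E : ∀ m, p₁ m = p (E m) := fun m => by
    rw [hp₁' m, F2 m, map_sub]; abel
  have hK₁E : ∀ m, K₁ m = K (E m) := fun m => by
    rw [hK₁' m, F2 m, map_sub]; abel
  have hEi₁ : ∀ n, E (i₁ n) = i₁ n := fun n => by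
    rw [hi₁' n, map_add, F9, F3]
  -- composite identities
  have hpdK : ∀ m, p (d (K m)) = 0 := fun m => by
    have h := congrArg p (hip' m)
    simp only [map_add, hpi', hpK'] at h
    exact lcomb1 h.symm (by abel)
  have hKdK : ∀ m, K (d (K m)) = -K m := fun m => by
    have h := congrArg K (hip' m)
    simp only [map_add, hKi', hKK'] at h
    exact lcomb1 h.symm (by abel)
  -- b₁ = p ∘ d₁ ∘ i₁
  have F8 : ∀ n, b₁ n = p (d₁ (i₁ n)) := fun n => by
    rw [hb₁' n, hi₁' n, hd₁', map_add, map_add, map_add, map_add,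
      hdi', hpi', hpdK, F1 (δ (i n))]
    simp only [map_add, map_sub]
    abel
  -- K ∘ d₁ ∘ i₁ = 0
  have S3 : ∀ n, K (d₁ (i₁ n)) = 0 := fun n => by
    rw [hi₁' n, hd₁', map_add, map_add, map_add, map_add,
      hdi', hKi', hKdK, F1 (δ (i n))]
    simp only [map_add, map_sub]
    abel
  -- d₁ ∘ i₁ = i₁ ∘ b₁
  have S4 : ∀ n, d₁ (i₁ n) = i₁ (b₁ n) := fun n => by
    have h1 : K (d₁ (i₁ n)) = 0 := S3 n
    have h2 : d (d₁ (i₁ n)) = -δ (d₁ (i₁ n)) := by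
      have h3 : d (d₁ (i₁ n)) + δ (d₁ (i₁ n)) = 0 := by
        rw [← hd₁' (d₁ (i₁ n))]; exact hdd₁ (i₁ n)
      exact eq_neg_of_add_eq_zero_left h3
    have : i₁ (b₁ n) = d₁ (i₁ n) := by
      rw [F8 n, hi₁' (p (d₁ (i₁ n))), hip' (d₁ (i₁ n)), h1, h2]
      simp only [map_zero, map_add, map_neg, map_sub, add_zero, F2]
      abel
    exact this.symm
  -- b₁ = p₁ ∘ d₁ ∘ i
  have F10 : ∀ n, b₁ n = p₁ (d₁ (i n)) := fun n => by
    rw [hb₁' n, hp₁E, hd₁' (i n), map_add, map_add, hdi', F9, hpi']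
  -- p₁ ∘ d₁ ∘ K = 0
  have h5a : ∀ m, p (E (d (K m))) = p m - p (E m) := fun m => by
    have h := congrArg (fun z => p (E z)) (hip' m)
    simp only [map_add, F9, hpi', F3, hpK', add_zero] at h
    exact lcomb1 h.symm (by abel)
  have S5 : ∀ m, p₁ (d₁ (K m)) = 0 := fun m => by
    rw [hp₁E, hd₁' (K m), map_add, map_add, F2 m, map_sub, h5a m]
    abel
  -- the eight conclusions
  refine ⟨?_, ?_, ?_, ?_, ?_, ?_, ?_, ?_⟩
  · -- b₁ ∘ b₁ = 0
    ext n
    simp only [LinearMap.comp_apply, LinearMap.zero_apply]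
    rw [F8 (b₁ n), ← S4 n, hdd₁ (i₁ n), map_zero]
  · -- d₁ ∘ i₁ = i₁ ∘ b₁
    ext n
    simp only [LinearMap.comp_apply]
    exact S4 n
  · -- b₁ ∘ p₁ = p₁ ∘ d₁
    ext x
    simp only [LinearMap.comp_apply]
    have h2 : d₁ (d (K (E x))) = -(d₁ (E x)) + d₁ x := by
      have ha : d (K (E x)) = d₁ (K (E x)) - (E x - x) := by
        rw [hd₁' (K (E x)), F1 x]; abel
      rw [ha, map_sub, hdd₁ (K (E x)), map_sub]
      abel
    calc b₁ (p₁ x) = p₁ (d₁ (i (p (E x)))) := by rw [hp₁E x, F10]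
      _ = p₁ (d₁ (E x)) + p₁ (d₁ (d (K (E x)))) + p₁ (d₁ (K (d (E x)))) := by
          rw [hip' (E x), map_add, map_add, map_add, map_add]
      _ = p₁ (d₁ x) := by rw [S5 (d (E x)), h2, map_add, map_neg]; abel
  · -- p₁ ∘ i₁ = 1
    ext n
    simp only [LinearMap.comp_apply, LinearMap.id_coe, id_eq]
    rw [hp₁E, hEi₁, hi₁' n, map_add, hpi', hpK', add_zero]
  · -- i₁ ∘ p₁ = 1 + d₁ ∘ K₁ + K₁ ∘ d₁
    ext x
    simp only [LinearMap.comp_apply, LinearMap.add_apply, LinearMap.id_coe, id_eq]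
    have hu1 : δ (K (E x)) = E x - x := F1 x
    have hδd : δ (d (K (E x))) = -(d (E x)) + d x - δ (E x) + δ x := by
      have h := LinearMap.congr_fun hδ (K (E x))
      simp only [LinearMap.comp_apply, LinearMap.add_apply, LinearMap.zero_apply,
        map_add, hu1, map_sub, hdd] at h
      exact lcomb1 h (by abel)
    have lhs : i₁ (p₁ x) =
        E x + d (K (E x)) + K (d (E x)) + K (E (δ (E x))) + K (E (δ (d (K (E x)))))
          + K (E (δ (K (d (E x))))) := by
      rw [hp₁E x, hi₁' (p (E x)), hip' (E x)]
      simp only [map_add]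
      abel
    rw [lhs, hδd, F2 (d (E x)), hK₁E x, hK₁E (d₁ x), hd₁' (K (E x)), hd₁' x, hu1]
    simp only [map_add, map_sub, map_neg]
    abel
  · -- p₁ ∘ K₁ = 0
    ext x
    simp only [LinearMap.comp_apply, LinearMap.zero_apply]
    rw [hK₁E x, hp₁E, F3, hpK']
  · -- K₁ ∘ i₁ = 0
    ext n
    simp only [LinearMap.comp_apply, LinearMap.zero_apply]
    rw [hK₁E, hEi₁, hi₁' n, map_add, hKi', hKK', add_zero]
  · -- K₁ ∘ K₁ = 0
    ext x
    simp only [LinearMap.comp_apply, LinearMap.zero_apply]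
    rw [hK₁E, hK₁E x, F3, hKK']
end

section
/- Given an SDR and a small perturbation δ of it, the perturbed maps admit the following closed-form expressions: i₁ = (1 − Kδ)⁻¹∘i, p₁ = p∘(1 − δK)⁻¹, K₁ = (1 − Kδ)⁻¹∘K = K∘(1 − δK)⁻¹, and b₁ = b + p₁∘δ∘i = b + p∘δ∘i₁ = p₁∘d₁∘i = p∘d₁∘i₁. -/
/-!
Write `A = (1 - δK)⁻¹ δ`. Multiplying out `(1 - δK)⁻¹ (1 - δK) = 1` gives `(1 - δK)⁻¹ = 1 + AK`,
and `(1 - Kδ)(1 + KA) = 1` shows `(1 - Kδ)⁻¹ = 1 + KA`; together they give the push-through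
identity `A = (1 - δK)⁻¹ δ = δ (1 - Kδ)⁻¹`, whence `A = δ + AKδ = δ + δKA`. The closed forms
for `i₁`, `p₁`, `K₁` are then immediate. For `b₁`, the terms of `p₁ d₁ i` and `p d₁ i₁` involving
`d` reduce, by the SDR identities, to `p d i = b`, `K d i = K i b = 0` and `p d K = b p K = 0`,
and the remaining terms recombine into `p A i` by the two recursions for `A`.
-/

open LinearMap

section OneSubMul

variable {S : Type*} [Ring S] {x y e e' : S}

theorem eq_one_add_mul_mul_of_mul_one_sub_eq_one (he : e * (1 - x * y) = 1) :
    e = 1 + e * x * y :=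
  calc e = e * (1 - x * y) + e * x * y := by noncomm_ring
    _ = 1 + e * x * y := by rw [he]

theorem one_sub_mul_mul_one_add_mul_mul_eq_one (he : (1 - x * y) * e = 1) :
    (1 - y * x) * (1 + y * e * x) = 1 :=
  calc (1 - y * x) * (1 + y * e * x) = 1 - y * x + y * ((1 - x * y) * e) * x := by noncomm_ring
    _ = 1 := by rw [he]; noncomm_ring

theorem eq_one_add_mul_mul_of_one_sub_mul_inverses (he : (1 - x * y) * e = 1)
    (he' : e' * (1 - y * x) = 1) : e' = 1 + y * e * x :=
  calc e' = e' * ((1 - y * x) * (1 + y * e * x)) := by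
        rw [one_sub_mul_mul_one_add_mul_mul_eq_one he, mul_one]
    _ = 1 + y * e * x := by rw [← mul_assoc, he', one_mul]

theorem mul_eq_mul_of_one_sub_mul_inverses (he : (1 - x * y) * e = 1)
    (he' : e' * (1 - y * x) = 1) : e * x = x * e' :=
  calc e * x = ((1 - x * y) * e + x * y * e) * x := by noncomm_ring
    _ = x * (1 + y * e * x) := by rw [he]; noncomm_ring
    _ = x * e' := by rw [← eq_one_add_mul_mul_of_one_sub_mul_inverses he he']

end OneSubMul

section Perturbation

variable {R N M : Type*} [CommRing R] [AddCommGroup N] [Module R N] [AddCommGroup M] [Module R M]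
  {b : Module.End R N} {d δ K A : Module.End R M} {i : N →ₗ[R] M} {p : M →ₗ[R] N}

theorem proj_comp_comp_incl_eq (hdi : d ∘ₗ i = i ∘ₗ b) (hpi : p ∘ₗ i = LinearMap.id) :
    p ∘ₗ (d ∘ₗ i) = b := by
  rw [hdi, ← comp_assoc, hpi, id_comp]

theorem proj_comp_perturbed_comp_perturbed_incl (hdi : d ∘ₗ i = i ∘ₗ b) (hbp : b ∘ₗ p = p ∘ₗ d)
    (hpi : p ∘ₗ i = LinearMap.id) (hpK : p ∘ₗ K = 0) (hA : A = δ + δ ∘ₗ (K ∘ₗ A)) :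
    p ∘ₗ ((d + δ) ∘ₗ (i + K ∘ₗ (A ∘ₗ i))) = b + p ∘ₗ (A ∘ₗ i) := by
  have hpdK : p ∘ₗ (d ∘ₗ K) = 0 := by rw [← comp_assoc, ← hbp, comp_assoc, hpK, comp_zero]
  calc p ∘ₗ ((d + δ) ∘ₗ (i + K ∘ₗ (A ∘ₗ i)))
      = p ∘ₗ (d ∘ₗ i) + (p ∘ₗ (d ∘ₗ K)) ∘ₗ (A ∘ₗ i) + p ∘ₗ ((δ + δ ∘ₗ (K ∘ₗ A)) ∘ₗ i) := by
        simp only [comp_add, add_comp, comp_assoc]; abel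
    _ = b + p ∘ₗ (A ∘ₗ i) := by
        rw [proj_comp_comp_incl_eq hdi hpi, hpdK, ← hA, zero_comp, add_zero]

theorem perturbed_proj_comp_perturbed_comp_incl (hdi : d ∘ₗ i = i ∘ₗ b)
    (hpi : p ∘ₗ i = LinearMap.id) (hKi : K ∘ₗ i = 0) (hA : A = δ + A ∘ₗ (K ∘ₗ δ)) :
    (p + p ∘ₗ (A ∘ₗ K)) ∘ₗ ((d + δ) ∘ₗ i) = b + p ∘ₗ (A ∘ₗ i) := by
  have hKdi : K ∘ₗ (d ∘ₗ i) = 0 := by rw [hdi, ← comp_assoc, hKi, zero_comp]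
  calc (p + p ∘ₗ (A ∘ₗ K)) ∘ₗ ((d + δ) ∘ₗ i)
      = p ∘ₗ (d ∘ₗ i) + (p ∘ₗ A) ∘ₗ (K ∘ₗ (d ∘ₗ i)) + p ∘ₗ ((δ + A ∘ₗ (K ∘ₗ δ)) ∘ₗ i) := by
        simp only [comp_add, add_comp, comp_assoc]
    _ = b + p ∘ₗ (A ∘ₗ i) := by
        rw [proj_comp_comp_incl_eq hdi hpi, hKdi, ← hA, comp_zero, add_zero]

end Perturbation

theorem perturbation_closed_forms_general
    {R N M : Type*} [CommRing R] [AddCommGroup N] [Module R N]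
    [AddCommGroup M] [Module R M]
    -- the SDR
    (b : Module.End R N) (d : Module.End R M)
    (i : N →ₗ[R] M) (p : M →ₗ[R] N) (K : Module.End R M)
    (hdi : d ∘ₗ i = i ∘ₗ b) (hbp : b ∘ₗ p = p ∘ₗ d)
    (hpi : p ∘ₗ i = LinearMap.id)
    (hpK : p ∘ₗ K = 0) (hKi : K ∘ₗ i = 0)
    -- a small perturbation
    (δ : Module.End R M)
    (E : Module.End R M)
    (hE₁ : (1 - δ ∘ₗ K) ∘ₗ E = 1) (hE₂ : E ∘ₗ (1 - δ ∘ₗ K) = 1)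
    (E' : Module.End R M)
    (hE'₂ : E' ∘ₗ (1 - K ∘ₗ δ) = 1)
    -- the perturbed data
    (A : Module.End R M) (hA : A = E ∘ₗ δ)
    (b₁ : Module.End R N) (hb₁ : b₁ = b + p ∘ₗ (A ∘ₗ i))
    (i₁ : N →ₗ[R] M) (hi₁ : i₁ = i + K ∘ₗ (A ∘ₗ i))
    (p₁ : M →ₗ[R] N) (hp₁ : p₁ = p + p ∘ₗ (A ∘ₗ K))
    (K₁ : Module.End R M) (hK₁ : K₁ = K + K ∘ₗ (A ∘ₗ K))
    (d₁ : Module.End R M) (hd₁ : d₁ = d + δ) :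
    i₁ = E' ∘ₗ i ∧
    p₁ = p ∘ₗ E ∧
    K₁ = E' ∘ₗ K ∧
    K₁ = K ∘ₗ E ∧
    b₁ = b + p₁ ∘ₗ (δ ∘ₗ i) ∧
    b₁ = b + p ∘ₗ (δ ∘ₗ i₁) ∧
    b₁ = p₁ ∘ₗ (d₁ ∘ₗ i) ∧
    b₁ = p ∘ₗ (d₁ ∘ₗ i₁) := by
  have hE : E = 1 + A ∘ₗ K := hA ▸ eq_one_add_mul_mul_of_mul_one_sub_eq_one hE₂
  have hE' : E' = 1 + K ∘ₗ A := hA ▸ eq_one_add_mul_mul_of_one_sub_mul_inverses hE₁ hE'₂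
  have hA' : A = δ ∘ₗ E' := hA.trans (mul_eq_mul_of_one_sub_mul_inverses hE₁ hE'₂)
  have hi₁' : i₁ = E' ∘ₗ i := by rw [hi₁, hE', add_comp, Module.End.one_eq_id, id_comp, comp_assoc]
  have hp₁' : p₁ = p ∘ₗ E := by rw [hp₁, hE, comp_add, Module.End.one_eq_id, comp_id]
  refine ⟨hi₁', hp₁', ?_, ?_, ?_, ?_, ?_, ?_⟩
  · rw [hK₁, hE', add_comp, Module.End.one_eq_id, id_comp, comp_assoc]
  · rw [hK₁, hE, comp_add, Module.End.one_eq_id, comp_id]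
  · simp only [hb₁, hp₁', hA, comp_assoc]
  · rw [hb₁, hi₁', hA', comp_assoc]
  · have hA_rec : A = δ + A ∘ₗ (K ∘ₗ δ) :=
      calc A = (1 + A ∘ₗ K) ∘ₗ δ := by rw [← hE, hA]
        _ = δ + A ∘ₗ (K ∘ₗ δ) := by rw [add_comp, Module.End.one_eq_id, id_comp, comp_assoc]
    rw [hb₁, hp₁, hd₁, perturbed_proj_comp_perturbed_comp_incl hdi hpi hKi hA_rec]
  · have hA_rec : A = δ + δ ∘ₗ (K ∘ₗ A) :=
      calc A = δ ∘ₗ (1 + K ∘ₗ A) := by rw [← hE', hA']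
        _ = δ + δ ∘ₗ (K ∘ₗ A) := by rw [comp_add, Module.End.one_eq_id, comp_id]
    rw [hb₁, hi₁, hd₁, proj_comp_perturbed_comp_perturbed_incl hdi hbp hpi hpK hA_rec]

/-- Closed-form expressions for the data of the homological perturbation lemma:
`i₁ = (1 - Kδ)⁻¹ i`, `p₁ = p (1 - δK)⁻¹`, `K₁ = (1 - Kδ)⁻¹ K = K (1 - δK)⁻¹` and
`b₁ = b + p₁ δ i = b + p δ i₁ = p₁ d₁ i = p d₁ i₁`.
Here `E` is the (two-sided) inverse of `1 - δ ∘ K` and `E'` that of `1 - K ∘ δ`. -/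
theorem perturbation_closed_forms
    {R N M : Type*} [CommRing R] [AddCommGroup N] [Module R N]
    [AddCommGroup M] [Module R M]
    -- the SDR
    (b : Module.End R N) (d : Module.End R M)
    (i : N →ₗ[R] M) (p : M →ₗ[R] N) (K : Module.End R M)
    (hb : b ∘ₗ b = 0) (hd : d ∘ₗ d = 0)
    (hdi : d ∘ₗ i = i ∘ₗ b) (hbp : b ∘ₗ p = p ∘ₗ d)
    (hpi : p ∘ₗ i = LinearMap.id)
    (hip : i ∘ₗ p = LinearMap.id + d ∘ₗ K + K ∘ₗ d)
    (hpK : p ∘ₗ K = 0) (hKi : K ∘ₗ i = 0) (hKK : K ∘ₗ K = 0)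
    -- a small perturbation
    (δ : Module.End R M) (hδ : (d + δ) ∘ₗ (d + δ) = 0)
    (E : Module.End R M)
    (hE₁ : (1 - δ ∘ₗ K) ∘ₗ E = 1) (hE₂ : E ∘ₗ (1 - δ ∘ₗ K) = 1)
    (E' : Module.End R M)
    (hE'₁ : (1 - K ∘ₗ δ) ∘ₗ E' = 1) (hE'₂ : E' ∘ₗ (1 - K ∘ₗ δ) = 1)
    -- the perturbed data
    (A : Module.End R M) (hA : A = E ∘ₗ δ)
    (b₁ : Module.End R N) (hb₁ : b₁ = b + p ∘ₗ (A ∘ₗ i))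
    (i₁ : N →ₗ[R] M) (hi₁ : i₁ = i + K ∘ₗ (A ∘ₗ i))
    (p₁ : M →ₗ[R] N) (hp₁ : p₁ = p + p ∘ₗ (A ∘ₗ K))
    (K₁ : Module.End R M) (hK₁ : K₁ = K + K ∘ₗ (A ∘ₗ K))
    (d₁ : Module.End R M) (hd₁ : d₁ = d + δ) :
    i₁ = E' ∘ₗ i ∧
    p₁ = p ∘ₗ E ∧
    K₁ = E' ∘ₗ K ∧
    K₁ = K ∘ₗ E ∧
    b₁ = b + p₁ ∘ₗ (δ ∘ₗ i) ∧
    b₁ = b + p ∘ₗ (δ ∘ₗ i₁) ∧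
    b₁ = p₁ ∘ₗ (d₁ ∘ₗ i) ∧
    b₁ = p ∘ₗ (d₁ ∘ₗ i₁) :=
  perturbation_closed_forms_general b d i p K hdi hbp hpi hpK hKi δ E hE₁ hE₂ E' hE'₂ A hA b₁ hb₁ i₁
    hi₁ p₁ hp₁ K₁ hK₁ d₁ hd₁
end

section
/- Given an SDR and a small perturbation δ of it, the following three statements are equivalent: (A) p∘δ∘K = 0; (B) the perturbed projection satisfies p₁ = p; (C) p∘δ = p∘δ∘i∘p. -/
/-- Given an SDR and a small perturbation `δ` of it, the following are equivalent:
(A) `p ∘ δ ∘ K = 0`; (B) the perturbed projection satisfies `p₁ = p`;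
(C) `p ∘ δ = p ∘ δ ∘ i ∘ p`. -/
theorem perturbed_projection_tfae
    {R N M : Type*} [CommRing R] [AddCommGroup N] [Module R N]
    [AddCommGroup M] [Module R M]
    -- the SDR
    (b : Module.End R N) (d : Module.End R M)
    (i : N →ₗ[R] M) (p : M →ₗ[R] N) (K : Module.End R M)
    (hb : b ∘ₗ b = 0) (hd : d ∘ₗ d = 0)
    (hdi : d ∘ₗ i = i ∘ₗ b) (hbp : b ∘ₗ p = p ∘ₗ d)
    (hpi : p ∘ₗ i = LinearMap.id)
    (hip : i ∘ₗ p = LinearMap.id + d ∘ₗ K + K ∘ₗ d)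
    (hpK : p ∘ₗ K = 0) (hKi : K ∘ₗ i = 0) (hKK : K ∘ₗ K = 0)
    -- a small perturbation
    (δ : Module.End R M) (hδ : (d + δ) ∘ₗ (d + δ) = 0)
    (E : Module.End R M)
    (hE₁ : (1 - δ ∘ₗ K) ∘ₗ E = 1) (hE₂ : E ∘ₗ (1 - δ ∘ₗ K) = 1)
    -- the perturbed data
    (A : Module.End R M) (hA : A = E ∘ₗ δ)
    (b₁ : Module.End R N) (hb₁ : b₁ = b + p ∘ₗ (A ∘ₗ i))
    (i₁ : N →ₗ[R] M) (hi₁ : i₁ = i + K ∘ₗ (A ∘ₗ i))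
    (p₁ : M →ₗ[R] N) (hp₁ : p₁ = p + p ∘ₗ (A ∘ₗ K))
    (K₁ : Module.End R M) (hK₁ : K₁ = K + K ∘ₗ (A ∘ₗ K))
    (d₁ : Module.End R M) (hd₁ : d₁ = d + δ) :
    ((p ∘ₗ (δ ∘ₗ K) = 0) ↔ (p₁ = p)) ∧
    ((p₁ = p) ↔ (p ∘ₗ δ = p ∘ₗ (δ ∘ₗ (i ∘ₗ p)))) := by
  -- restate endomorphism hypotheses in terms of ring multiplication
  have hd' : d * d = 0 := hd
  have hδ' : (d + δ) * (d + δ) = 0 := hδ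
  have hE₁' : (1 - δ * K) * E = 1 := hE₁
  have hE₂' : E * (1 - δ * K) = 1 := hE₂
  have hA' : A = E * δ := hA
  have hmix : d * δ + δ * d + δ * δ = 0 := by
    have h : (d + δ) * (d + δ) = d * d + (d * δ + δ * d + δ * δ) := by noncomm_ring
    rw [hδ', hd', zero_add] at h
    exact h.symm
  have hE : E = 1 + A * K := by
    have h : E - A * K = 1 := by rw [← hE₂', hA']; noncomm_ring
    calc E = (E - A * K) + A * K := by noncomm_ring
      _ = 1 + A * K := by rw [h]
  have hAK : A * K = E - 1 := by rw [hE]; noncomm_ring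
  have hδKE : (δ * K) * E = E - 1 := by
    have h : E - (δ * K) * E = 1 := by rw [← hE₁']; noncomm_ring
    calc (δ * K) * E = E - (E - (δ * K) * E) := by noncomm_ring
      _ = E - 1 := by rw [h]
  -- forward: p∘δ∘K = 0 → p∘A∘K = 0
  have hpAK_of : p ∘ₗ (δ ∘ₗ K) = 0 → p ∘ₗ (A ∘ₗ K) = 0 := by
    intro h
    have hc : A ∘ₗ K = (δ ∘ₗ K) ∘ₗ E := by
      show A * K = (δ * K) * E
      rw [hAK, hδKE]
    rw [hc, ← LinearMap.comp_assoc, h, LinearMap.zero_comp]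
  -- backward: p∘A∘K = 0 → p∘δ∘K = 0
  have hδK_of : p ∘ₗ (A ∘ₗ K) = 0 → p ∘ₗ (δ ∘ₗ K) = 0 := by
    intro h
    have hc : δ ∘ₗ K = (A ∘ₗ K) ∘ₗ (1 - δ * K) := by
      show δ * K = (A * K) * (1 - δ * K)
      rw [hAK]
      have h2 : (E - 1) * (1 - δ * K) = E * (1 - δ * K) - (1 - δ * K) := by noncomm_ring
      rw [h2, hE₂']
      noncomm_ring
    rw [hc, ← LinearMap.comp_assoc, h, LinearMap.zero_comp]
  have hBiff : (p ∘ₗ (A ∘ₗ K) = 0) ↔ p₁ = p := by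
    rw [hp₁]
    constructor
    · intro h; rw [h, add_zero]
    · intro h
      have h' : p + p ∘ₗ (A ∘ₗ K) = p + 0 := by rw [h, add_zero]
      exact add_left_cancel h'
  refine ⟨⟨fun h => hBiff.mp (hpAK_of h), fun h => hδK_of (hBiff.mpr h)⟩, ?_, ?_⟩
  · -- (B) → (C)
    intro hB
    have hpAK : p ∘ₗ (A ∘ₗ K) = 0 := hBiff.mpr hB
    -- the key algebraic identity
    have base : (d + δ) * (1 - δ * K) = (1 - δ * K) * d + δ * (1 + d * K + K * d) := by
      have expand : (d + δ) * (1 - δ * K)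
          = (1 - δ * K) * d + δ * (1 + d * K + K * d) - (d * δ + δ * d + δ * δ) * K := by
        noncomm_ring
      rw [expand, hmix, zero_mul, sub_zero]
    have step1 : d + δ = ((1 - δ * K) * d + δ * (1 + d * K + K * d)) * E := by
      calc d + δ = (d + δ) * ((1 - δ * K) * E) := by rw [hE₁', mul_one]
        _ = ((d + δ) * (1 - δ * K)) * E := by rw [mul_assoc]
        _ = _ := by rw [base]
    have key : E * (d + δ) = d * E + (E * δ) * ((1 + d * K + K * d) * E) := by
      calc E * (d + δ) = E * (((1 - δ * K) * d + δ * (1 + d * K + K * d)) * E) := by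
            rw [← step1]
        _ = (E * (1 - δ * K)) * (d * E) + (E * δ) * ((1 + d * K + K * d) * E) := by
            noncomm_ring
        _ = d * E + (E * δ) * ((1 + d * K + K * d) * E) := by rw [hE₂', one_mul]
    have hP : (1 : Module.End R M) + d * K + K * d = i ∘ₗ p := hip.symm
    rw [hP] at key
    -- p ∘ E = p
    have hpE : p ∘ₗ E = p := by
      rw [hE]
      have h1 : p ∘ₗ ((1 : Module.End R M) + A * K) = p ∘ₗ (1 : Module.End R M) + p ∘ₗ (A ∘ₗ K) :=
        LinearMap.comp_add _ _ _
      rw [h1, hpAK, add_zero]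
      rfl
    -- compose key with p on the left
    have keyp : p ∘ₗ (E * (d + δ)) = p ∘ₗ (d * E + (E * δ) * ((i ∘ₗ p) * E)) :=
      congrArg (fun f : Module.End R M => p ∘ₗ f) key
    have lhs : p ∘ₗ (E * (d + δ)) = p ∘ₗ d + p ∘ₗ δ := by
      show p ∘ₗ (E ∘ₗ (d + δ)) = _
      rw [← LinearMap.comp_assoc, hpE, LinearMap.comp_add]
    have hipE : (i ∘ₗ p) * E = i ∘ₗ p := by
      show (i ∘ₗ p) ∘ₗ E = i ∘ₗ p
      rw [LinearMap.comp_assoc, hpE]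
    rw [hipE] at keyp
    have rhs : p ∘ₗ (d * E + (E * δ) * (i ∘ₗ p)) = p ∘ₗ d + (p ∘ₗ δ) ∘ₗ (i ∘ₗ p) := by
      rw [LinearMap.comp_add]
      congr 1
      · show p ∘ₗ (d ∘ₗ E) = p ∘ₗ d
        rw [← LinearMap.comp_assoc, ← hbp, LinearMap.comp_assoc, hpE, hbp]
      · show p ∘ₗ ((E ∘ₗ δ) ∘ₗ (i ∘ₗ p)) = (p ∘ₗ δ) ∘ₗ (i ∘ₗ p)
        rw [← LinearMap.comp_assoc, ← LinearMap.comp_assoc δ E p, hpE]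
    rw [lhs, rhs] at keyp
    have := add_left_cancel keyp
    rw [this, LinearMap.comp_assoc]
  · -- (C) → (B)
    intro hC
    have h0 : p ∘ₗ (δ ∘ₗ K) = 0 := by
      have h1 : p ∘ₗ (δ ∘ₗ K) = (p ∘ₗ δ) ∘ₗ K := by rw [LinearMap.comp_assoc]
      rw [h1, hC]
      have h2 : (p ∘ₗ (δ ∘ₗ (i ∘ₗ p))) ∘ₗ K = (p ∘ₗ (δ ∘ₗ i)) ∘ₗ (p ∘ₗ K) := by
        simp only [LinearMap.comp_assoc]
      rw [h2, hpK, LinearMap.comp_zero]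
    exact hBiff.mp (hpAK_of h0)
end

section
/- Given an SDR and a small perturbation δ of it, the following three statements are equivalent: (A) K∘δ∘i = 0; (B) the perturbed injection satisfies i₁ = i; (C) i∘p∘δ∘i = δ∘i. -/
/-- Key noncommutative ring identity behind the homological perturbation lemma:
if `a = δ + δKa = δ + aKδ` and `d δ + δ d + δ δ = 0` and `ip = 1 + dK + Kd`,
then `d a + a d + a ip a = 0`. -/
private lemma hpl_ring_key {S : Type*} [Ring S] (d δ K a ip : S)
    (h1 : d * δ + (δ * d + δ * δ) = 0)
    (hx : a = δ + δ * (K * a)) (hy : a = δ + (a * K) * δ)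
    (h4 : ip = 1 + (d * K + K * d)) :
    d * a + (a * d + a * (ip * a)) = 0 := by
  calc d * a + (a * d + a * (ip * a))
      = d * (δ + δ * (K * a)) + ((δ + (a * K) * δ) * d +
          ((δ + (a * K) * δ) * (δ + δ * (K * a)) +
           (((δ + (a * K) * δ) * d) * (K * a) + (a * K) * (d * (δ + δ * (K * a)))))) := by
        conv_rhs => rw [← hx, ← hy]
        rw [h4]; noncomm_ring
    _ = (1 + a * K) * ((d * δ + (δ * d + δ * δ)) * (1 + K * a)) := by noncomm_ring
    _ = 0 := by rw [h1]; simp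

/-- Given an SDR and a small perturbation `δ` of it, the following are equivalent:
(A) `K ∘ δ ∘ i = 0`; (B) the perturbed injection satisfies `i₁ = i`;
(C) `i ∘ p ∘ δ ∘ i = δ ∘ i`. -/
theorem perturbed_injection_tfae
    {R N M : Type*} [CommRing R] [AddCommGroup N] [Module R N]
    [AddCommGroup M] [Module R M]
    -- the SDR
    (b : Module.End R N) (d : Module.End R M)
    (i : N →ₗ[R] M) (p : M →ₗ[R] N) (K : Module.End R M)
    (hb : b ∘ₗ b = 0) (hd : d ∘ₗ d = 0)
    (hdi : d ∘ₗ i = i ∘ₗ b) (hbp : b ∘ₗ p = p ∘ₗ d)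
    (hpi : p ∘ₗ i = LinearMap.id)
    (hip : i ∘ₗ p = LinearMap.id + d ∘ₗ K + K ∘ₗ d)
    (hpK : p ∘ₗ K = 0) (hKi : K ∘ₗ i = 0) (hKK : K ∘ₗ K = 0)
    -- a small perturbation
    (δ : Module.End R M) (hδ : (d + δ) ∘ₗ (d + δ) = 0)
    (E : Module.End R M)
    (hE₁ : (1 - δ ∘ₗ K) ∘ₗ E = 1) (hE₂ : E ∘ₗ (1 - δ ∘ₗ K) = 1)
    -- the perturbed data
    (A : Module.End R M) (hA : A = E ∘ₗ δ)
    (b₁ : Module.End R N) (hb₁ : b₁ = b + p ∘ₗ (A ∘ₗ i))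
    (i₁ : N →ₗ[R] M) (hi₁ : i₁ = i + K ∘ₗ (A ∘ₗ i))
    (p₁ : M →ₗ[R] N) (hp₁ : p₁ = p + p ∘ₗ (A ∘ₗ K))
    (K₁ : Module.End R M) (hK₁ : K₁ = K + K ∘ₗ (A ∘ₗ K))
    (d₁ : Module.End R M) (hd₁ : d₁ = d + δ) :
    ((K ∘ₗ (δ ∘ₗ i) = 0) ↔ (i₁ = i)) ∧
    ((i₁ = i) ↔ (i ∘ₗ (p ∘ₗ (δ ∘ₗ i)) = δ ∘ₗ i)) := by
  -- translate the basic data into the endomorphism ring `Module.End R M`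
  have hd' : d * d = 0 := hd
  have hδ' : (d + δ) * (d + δ) = 0 := hδ
  have h1 : d * δ + (δ * d + δ * δ) = 0 := by
    have e : d * δ + (δ * d + δ * δ) = (d + δ) * (d + δ) - d * d := by noncomm_ring
    rw [e, hδ', hd', sub_zero]
  have hA' : A = E * δ := hA
  have hE1' : (1 - δ * K) * E = 1 := hE₁
  have hE2' : E * (1 - δ * K) = 1 := hE₂
  have hEx : E = 1 + δ * (K * E) := by
    have h' : E - δ * (K * E) = 1 := by rw [← hE1']; noncomm_ring
    exact eq_add_of_sub_eq h'
  have hEy : E = 1 + (E * δ) * K := by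
    have h' : E - (E * δ) * K = 1 := by rw [← hE2']; noncomm_ring
    exact eq_add_of_sub_eq h'
  have hx : A = δ + δ * (K * A) := by
    calc A = E * δ := hA'
      _ = (1 + δ * (K * E)) * δ := by conv_lhs => rw [hEx]
      _ = δ + δ * (K * (E * δ)) := by noncomm_ring
      _ = δ + δ * (K * A) := by rw [← hA']
  have hy : A = δ + (A * K) * δ := by
    calc A = E * δ := hA'
      _ = (1 + (E * δ) * K) * δ := by conv_lhs => rw [hEy]
      _ = δ + ((E * δ) * K) * δ := by noncomm_ring
      _ = δ + (A * K) * δ := by rw [← hA']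
  have h4 : i ∘ₗ p = 1 + (d * K + K * d) := by
    rw [hip]
    simp only [Module.End.mul_eq_comp, Module.End.one_eq_id]
    abel
  -- the key HPL identity
  have key : d * A + (A * d + A * ((i ∘ₗ p) * A)) = 0 :=
    hpl_ring_key d δ K A (i ∘ₗ p) h1 hx hy h4
  -- fixed point equation for K*A
  have hKA : K * A = K * δ + (K * δ) * (K * A) := by
    conv_lhs => rw [hx]
    noncomm_ring
  have hFKA : K * A - (K * δ) * (K * A) = K * δ := by
    nth_rewrite 1 [hKA]; noncomm_ring
  -- invertibility of (1 - K*δ)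
  have hy0 : A - (δ + (A * K) * δ) = 0 := by rw [← hy]; simp
  have hinv : (1 + K * A) * (1 - K * δ) = 1 := by
    have e : (1 + K * A) * (1 - K * δ) - 1 = K * (A - (δ + (A * K) * δ)) := by noncomm_ring
    rw [hy0, mul_zero, sub_eq_zero] at e
    exact e
  -- (A) → (B)
  have AtoB : K ∘ₗ (δ ∘ₗ i) = 0 → i₁ = i := by
    intro hPA
    have h0 : (K * δ) ∘ₗ i = 0 := by
      rw [Module.End.mul_eq_comp, LinearMap.comp_assoc]; exact hPA
    have step : (K * A) ∘ₗ i - (K * δ) ∘ₗ ((K * A) ∘ₗ i) = 0 := by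
      have h2 := congrArg (fun f => f ∘ₗ i) hFKA
      simp only [LinearMap.sub_comp] at h2
      rw [h0] at h2
      rw [Module.End.mul_eq_comp (K * δ) (K * A), LinearMap.comp_assoc] at h2
      exact h2
    have step2 : ((1 : Module.End R M) - K * δ) ∘ₗ ((K * A) ∘ₗ i) = 0 := by
      rw [LinearMap.sub_comp, Module.End.one_eq_id, LinearMap.id_comp]
      exact step
    have hg : (K * A) ∘ₗ i = 0 := by
      have h2 := congrArg (fun f => ((1 : Module.End R M) + K * A) ∘ₗ f) step2
      simp only [LinearMap.comp_zero] at h2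
      rw [← LinearMap.comp_assoc, ← Module.End.mul_eq_comp, hinv,
        Module.End.one_eq_id, LinearMap.id_comp] at h2
      exact h2
    rw [hi₁, ← LinearMap.comp_assoc, ← Module.End.mul_eq_comp, hg, add_zero]
  -- (B) → (A)
  have BtoKAi : i₁ = i → (K * A) ∘ₗ i = 0 := by
    intro hB
    have h0 : i + K ∘ₗ (A ∘ₗ i) = i := by rw [← hi₁]; exact hB
    have h2 : K ∘ₗ (A ∘ₗ i) = 0 := by
      have := add_eq_left.mp h0
      exact this
    rw [Module.End.mul_eq_comp, LinearMap.comp_assoc]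
    exact h2
  have BtoA : i₁ = i → K ∘ₗ (δ ∘ₗ i) = 0 := by
    intro hB
    have hg := BtoKAi hB
    have h2 := congrArg (fun f => f ∘ₗ i) hFKA
    simp only [LinearMap.sub_comp] at h2
    rw [hg, Module.End.mul_eq_comp (K * δ) (K * A), LinearMap.comp_assoc, hg,
      LinearMap.comp_zero, sub_zero] at h2
    rw [← LinearMap.comp_assoc, ← Module.End.mul_eq_comp]
    exact h2.symm
  -- (B) → (C)
  have BtoC : i₁ = i → i ∘ₗ (p ∘ₗ (δ ∘ₗ i)) = δ ∘ₗ i := by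
    intro hB
    have hg := BtoKAi hB
    have hgc : K ∘ₗ (A ∘ₗ i) = 0 := by
      rw [← LinearMap.comp_assoc, ← Module.End.mul_eq_comp]; exact hg
    have hPA' : K ∘ₗ (δ ∘ₗ i) = 0 := BtoA hB
    have hAi : A ∘ₗ i = δ ∘ₗ i := by
      conv_lhs => rw [hx]
      rw [LinearMap.add_comp, Module.End.mul_eq_comp, LinearMap.comp_assoc, hg,
        LinearMap.comp_zero, add_zero]
    -- compose the key identity with i on the right and K on the left
    have hcomp := congrArg (fun f => K ∘ₗ (f ∘ₗ i)) key
    simp only [Module.End.mul_eq_comp, LinearMap.add_comp, LinearMap.comp_add,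
      LinearMap.comp_assoc, LinearMap.zero_comp, LinearMap.comp_zero] at hcomp
    rw [hAi, hdi] at hcomp
    have e1 : K ∘ₗ (A ∘ₗ (i ∘ₗ b)) = (K ∘ₗ (A ∘ₗ i)) ∘ₗ b := by
      simp only [LinearMap.comp_assoc]
    have e2 : K ∘ₗ (A ∘ₗ (i ∘ₗ (p ∘ₗ (δ ∘ₗ i)))) =
        (K ∘ₗ (A ∘ₗ i)) ∘ₗ (p ∘ₗ (δ ∘ₗ i)) := by
      simp only [LinearMap.comp_assoc]
    rw [e1, e2, hgc, LinearMap.zero_comp, LinearMap.zero_comp, add_zero, add_zero] at hcomp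
    -- hcomp : K ∘ₗ (d ∘ₗ (δ ∘ₗ i)) = 0
    have goal1 : i ∘ₗ (p ∘ₗ (δ ∘ₗ i)) = (i ∘ₗ p) ∘ₗ (δ ∘ₗ i) := by
      simp only [LinearMap.comp_assoc]
    rw [goal1, h4]
    simp only [LinearMap.add_comp, Module.End.mul_eq_comp, LinearMap.comp_assoc,
      Module.End.one_eq_id, LinearMap.id_comp]
    rw [hPA', hcomp, LinearMap.comp_zero, add_zero, add_zero]
  -- (C) → (A)
  have CtoA : i ∘ₗ (p ∘ₗ (δ ∘ₗ i)) = δ ∘ₗ i → K ∘ₗ (δ ∘ₗ i) = 0 := by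
    intro hC
    have h2 := congrArg (fun f => K ∘ₗ f) hC
    rw [← LinearMap.comp_assoc (p ∘ₗ (δ ∘ₗ i)) i K, hKi, LinearMap.zero_comp] at h2
    exact h2.symm
  exact ⟨⟨AtoB, BtoA⟩, ⟨BtoC, fun h => AtoB (CtoA h)⟩⟩
end

section
/- Let an SDR be given, and let δ₁ and δ₁ + δ₂ both be small perturbations of d (i.e. (d+δ₁)² = 0, (d+δ₁+δ₂)² = 0, and both (1 − δ₁K) and (1 − (δ₁+δ₂)K) are invertible). Let K₁ = K + K(1−δ₁K)⁻¹δ₁K be the homotopy of the SDR perturbed by δ₁. Then (1 − δ₂∘K₁) is invertible, with inverse (1 − δ₁K)∘(1 − (δ₁+δ₂)K)⁻¹; in particular δ₂ is a small perturbation of the δ₁-perturbed SDR. -/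
/-- Let an SDR be given, and let `δ₁` and `δ₁ + δ₂` both be small perturbations of `d`
(with two-sided inverses `E₁` of `1 - δ₁K` and `E₁₂` of `1 - (δ₁+δ₂)K`).  Let
`K₁ = K + K E₁ δ₁ K` be the homotopy of the SDR perturbed by `δ₁`.  Then
`1 - δ₂ ∘ K₁` is invertible with inverse `(1 - δ₁K) ∘ E₁₂`; in particular `δ₂` is a
small perturbation of the `δ₁`-perturbed SDR. -/
theorem second_perturbation_small
    {R N M : Type*} [CommRing R] [AddCommGroup N] [Module R N]
    [AddCommGroup M] [Module R M]
    -- the SDR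
    (b : Module.End R N) (d : Module.End R M)
    (i : N →ₗ[R] M) (p : M →ₗ[R] N) (K : Module.End R M)
    (hb : b ∘ₗ b = 0) (hd : d ∘ₗ d = 0)
    (hdi : d ∘ₗ i = i ∘ₗ b) (hbp : b ∘ₗ p = p ∘ₗ d)
    (hpi : p ∘ₗ i = LinearMap.id)
    (hip : i ∘ₗ p = LinearMap.id + d ∘ₗ K + K ∘ₗ d)
    (hpK : p ∘ₗ K = 0) (hKi : K ∘ₗ i = 0) (hKK : K ∘ₗ K = 0)
    -- two small perturbations
    (δ₁ δ₂ : Module.End R M)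
    (hδ₁ : (d + δ₁) ∘ₗ (d + δ₁) = 0)
    (hδ₁₂ : (d + (δ₁ + δ₂)) ∘ₗ (d + (δ₁ + δ₂)) = 0)
    (E₁ : Module.End R M)
    (hE₁₁ : (1 - δ₁ ∘ₗ K) ∘ₗ E₁ = 1) (hE₁₂ : E₁ ∘ₗ (1 - δ₁ ∘ₗ K) = 1)
    (E₁₂ : Module.End R M)
    (hE₁₂₁ : (1 - (δ₁ + δ₂) ∘ₗ K) ∘ₗ E₁₂ = 1)
    (hE₁₂₂ : E₁₂ ∘ₗ (1 - (δ₁ + δ₂) ∘ₗ K) = 1)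
    -- the homotopy of the SDR perturbed by δ₁
    (K₁ : Module.End R M) (hK₁ : K₁ = K + K ∘ₗ ((E₁ ∘ₗ δ₁) ∘ₗ K)) :
    (1 - δ₂ ∘ₗ K₁) ∘ₗ ((1 - δ₁ ∘ₗ K) ∘ₗ E₁₂) = 1 ∧
    ((1 - δ₁ ∘ₗ K) ∘ₗ E₁₂) ∘ₗ (1 - δ₂ ∘ₗ K₁) = 1 := by
  simp only [← Module.End.mul_eq_comp] at *
  -- K₁ = K * E₁
  have hE₁' : E₁ = 1 + E₁ * δ₁ * K := by
    have := hE₁₂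
    rw [mul_sub, mul_one] at this
    rw [← this]; noncomm_ring
  have hK₁' : K₁ = K * E₁ := by
    rw [hK₁]
    nth_rewrite 2 [hE₁']
    noncomm_ring
  -- 1 - δ₂ K₁ = (1 - (δ₁+δ₂)K) * E₁
  have hB : 1 - δ₂ * K₁ = (1 - (δ₁ + δ₂) * K) * E₁ := by
    rw [hK₁']
    have : (1 - (δ₁ + δ₂) * K) * E₁ = (1 - δ₁ * K) * E₁ - δ₂ * (K * E₁) := by noncomm_ring
    rw [this, hE₁₁]
  constructor
  · rw [hB]
    calc (1 - (δ₁ + δ₂) * K) * E₁ * ((1 - δ₁ * K) * E₁₂)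
        = (1 - (δ₁ + δ₂) * K) * (E₁ * (1 - δ₁ * K)) * E₁₂ := by noncomm_ring
      _ = 1 := by rw [hE₁₂, mul_one, hE₁₂₁]
  · rw [hB]
    calc (1 - δ₁ * K) * E₁₂ * ((1 - (δ₁ + δ₂) * K) * E₁)
        = (1 - δ₁ * K) * (E₁₂ * (1 - (δ₁ + δ₂) * K)) * E₁ := by noncomm_ring
      _ = 1 := by rw [hE₁₂₂, mul_one, hE₁₁]
end

section
/- (Associativity of homological perturbation.) Let an SDR be given, with two small perturbations δ₁ and δ₁ + δ₂ of d as above. Set A₂ := (1 − (δ₁+δ₂)K)⁻¹(δ₁+δ₂) and define the one-step perturbed data b₂ = b + pA₂i, i₂ = i + KA₂i, p₂ = p + pA₂K, K₂ = K + KA₂K. Separately, first perturb the SDR by δ₁ to obtain (b₁, i₁, p₁, K₁), then set A₂′ := (1 − δ₂K₁)⁻¹δ₂ and define the two-step perturbed data b₂′ = b₁ + p₁A₂′i₁, i₂′ = i₁ + K₁A₂′i₁, p₂′ = p₁ + p₁A₂′K₁, K₂′ = K₁ + K₁A₂′K₁. Then the two perturbed SDRs coincide: b₂′ = b₂, i₂′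 = i₂, p₂′ = p₂, K₂′ = K₂. -/
/-- **Associativity of homological perturbation.**
Perturbing an SDR in one step by `δ₁ + δ₂`, or first by `δ₁` and then by `δ₂`
(using the homological perturbation lemma at each step), yields the same SDR:
`b₂' = b₂`, `i₂' = i₂`, `p₂' = p₂`, `K₂' = K₂`. -/
theorem perturbation_associativity
    {R N M : Type*} [CommRing R] [AddCommGroup N] [Module R N]
    [AddCommGroup M] [Module R M]
    -- the SDR
    (b : Module.End R N) (d : Module.End R M)
    (i : N →ₗ[R] M) (p : M →ₗ[R] N) (K : Module.End R M)
    (hb : b ∘ₗ b = 0) (hd : d ∘ₗ d = 0)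
    (hdi : d ∘ₗ i = i ∘ₗ b) (hbp : b ∘ₗ p = p ∘ₗ d)
    (hpi : p ∘ₗ i = LinearMap.id)
    (hip : i ∘ₗ p = LinearMap.id + d ∘ₗ K + K ∘ₗ d)
    (hpK : p ∘ₗ K = 0) (hKi : K ∘ₗ i = 0) (hKK : K ∘ₗ K = 0)
    -- two small perturbations
    (δ₁ δ₂ : Module.End R M)
    (hδ₁ : (d + δ₁) ∘ₗ (d + δ₁) = 0)
    (hδ₁₂ : (d + (δ₁ + δ₂)) ∘ₗ (d + (δ₁ + δ₂)) = 0)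
    (E₁ : Module.End R M)
    (hE₁₁ : (1 - δ₁ ∘ₗ K) ∘ₗ E₁ = 1) (hE₁₂ : E₁ ∘ₗ (1 - δ₁ ∘ₗ K) = 1)
    (E₁₂ : Module.End R M)
    (hE₁₂₁ : (1 - (δ₁ + δ₂) ∘ₗ K) ∘ₗ E₁₂ = 1)
    (hE₁₂₂ : E₁₂ ∘ₗ (1 - (δ₁ + δ₂) ∘ₗ K) = 1)
    -- the one-step perturbation by δ₁ + δ₂
    (A₂ : Module.End R M) (hA₂ : A₂ = E₁₂ ∘ₗ (δ₁ + δ₂))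
    (b₂ : Module.End R N) (hb₂ : b₂ = b + p ∘ₗ (A₂ ∘ₗ i))
    (i₂ : N →ₗ[R] M) (hi₂ : i₂ = i + K ∘ₗ (A₂ ∘ₗ i))
    (p₂ : M →ₗ[R] N) (hp₂ : p₂ = p + p ∘ₗ (A₂ ∘ₗ K))
    (K₂ : Module.End R M) (hK₂ : K₂ = K + K ∘ₗ (A₂ ∘ₗ K))
    -- the intermediate perturbation by δ₁
    (A₁ : Module.End R M) (hA₁ : A₁ = E₁ ∘ₗ δ₁)
    (b₁ : Module.End R N) (hb₁ : b₁ = b + p ∘ₗ (A₁ ∘ₗ i))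
    (i₁ : N →ₗ[R] M) (hi₁ : i₁ = i + K ∘ₗ (A₁ ∘ₗ i))
    (p₁ : M →ₗ[R] N) (hp₁ : p₁ = p + p ∘ₗ (A₁ ∘ₗ K))
    (K₁ : Module.End R M) (hK₁ : K₁ = K + K ∘ₗ (A₁ ∘ₗ K))
    -- the second-step perturbation by δ₂ (small with respect to the perturbed SDR)
    (E₂' : Module.End R M)
    (hE₂'₁ : (1 - δ₂ ∘ₗ K₁) ∘ₗ E₂' = 1) (hE₂'₂ : E₂' ∘ₗ (1 - δ₂ ∘ₗ K₁) = 1)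
    (A₂' : Module.End R M) (hA₂' : A₂' = E₂' ∘ₗ δ₂)
    (b₂' : Module.End R N) (hb₂' : b₂' = b₁ + p₁ ∘ₗ (A₂' ∘ₗ i₁))
    (i₂' : N →ₗ[R] M) (hi₂' : i₂' = i₁ + K₁ ∘ₗ (A₂' ∘ₗ i₁))
    (p₂' : M →ₗ[R] N) (hp₂' : p₂' = p₁ + p₁ ∘ₗ (A₂' ∘ₗ K₁))
    (K₂' : Module.End R M) (hK₂' : K₂' = K₁ + K₁ ∘ₗ (A₂' ∘ₗ K₁)) :
    b₂' = b₂ ∧ i₂' = i₂ ∧ p₂' = p₂ ∧ K₂' = K₂ := by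
  have hm : ∀ f g : Module.End R M, f ∘ₗ g = f * g := fun _ _ => rfl
  -- restate the invertibility hypotheses multiplicatively
  have hE₁₁' : ((1 : Module.End R M) - δ₁ * K) * E₁ = 1 := hE₁₁
  have hE₂'₁' : ((1 : Module.End R M) - δ₂ * K₁) * E₂' = 1 := hE₂'₁
  have hE₁₂₂' : E₁₂ * ((1 : Module.End R M) - (δ₁ + δ₂) * K) = 1 := hE₁₂₂
  have hE₁e : E₁ = 1 + E₁ * (δ₁ * K) := by
    have h : E₁ * (1 - δ₁ * K) = 1 := hE₁₂
    rwa [mul_sub, mul_one, sub_eq_iff_eq_add] at h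
  have hE₁₂e : E₁₂ = 1 + E₁₂ * ((δ₁ + δ₂) * K) := by
    have h : E₁₂ * (1 - (δ₁ + δ₂) * K) = 1 := hE₁₂₂
    rwa [mul_sub, mul_one, sub_eq_iff_eq_add] at h
  have hE₂e : E₂' = 1 + E₂' * (δ₂ * K₁) := by
    have h : E₂' * (1 - δ₂ * K₁) = 1 := hE₂'₂
    rwa [mul_sub, mul_one, sub_eq_iff_eq_add] at h
  -- K₁ = K * E₁
  have hK₁E : K₁ = K * E₁ := by
    rw [hK₁, hA₁]
    conv_rhs => rw [hE₁e]
    simp only [hm]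
    noncomm_ring
  -- factorization
  have hfac : (1 : Module.End R M) - (δ₁ + δ₂) * K = (1 - δ₂ * K₁) * (1 - δ₁ * K) := by
    have hE₁₂' : E₁ * ((1 : Module.End R M) - δ₁ * K) = 1 := hE₁₂
    have h : (1 - δ₂ * (K * E₁)) * (1 - δ₁ * K)
        = (1 - δ₁ * K) - δ₂ * (K * (E₁ * (1 - δ₁ * K))) := by noncomm_ring
    rw [hK₁E, h, hE₁₂']
    noncomm_ring
  -- E₁₂ = E₁ * E₂'
  have hZ : ((1 : Module.End R M) - (δ₁ + δ₂) * K) * (E₁ * E₂') = 1 := by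
    rw [hfac, mul_assoc, ← mul_assoc (1 - δ₁ * K), hE₁₁', one_mul, hE₂'₁']
  have hE12 : E₁₂ = E₁ * E₂' := by
    calc E₁₂ = E₁₂ * (((1 : Module.End R M) - (δ₁ + δ₂) * K) * (E₁ * E₂')) := by
          rw [hZ, mul_one]
      _ = (E₁₂ * ((1 : Module.End R M) - (δ₁ + δ₂) * K)) * (E₁ * E₂') := by rw [mul_assoc]
      _ = E₁ * E₂' := by rw [hE₁₂₂', one_mul]
  -- key identities
  have h4 : E₁ + E₁ * (E₂' * (δ₂ * (K * E₁))) = E₁ * E₂' := by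
    conv_rhs => rw [hE₂e, hK₁E]
    noncomm_ring
  have hH : E₁ * δ₁ + (E₁ * (E₂' * δ₂)) * (1 + K * (E₁ * δ₁)) = (E₁ * E₂') * (δ₁ + δ₂) := by
    have expand : E₁ * δ₁ + (E₁ * (E₂' * δ₂)) * (1 + K * (E₁ * δ₁))
        = (E₁ + E₁ * (E₂' * (δ₂ * (K * E₁)))) * δ₁ + (E₁ * E₂') * δ₂ := by noncomm_ring
    rw [expand, h4]; noncomm_ring
  -- normalized forms of intermediate data
  have hp₁E : p₁ = p ∘ₗ E₁ := by
    rw [hp₁, hA₁]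
    conv_rhs => rw [hE₁e]
    ext x
    simp [LinearMap.add_apply, LinearMap.comp_apply, Module.End.mul_apply,
      Module.End.one_apply, map_add]
  have hi₁E : i₁ = (1 + K * (E₁ * δ₁)) ∘ₗ i := by
    rw [hi₁, hA₁]
    ext x
    simp [LinearMap.add_apply, LinearMap.comp_apply, Module.End.mul_apply,
      Module.End.one_apply, map_add]
  refine ⟨?_, ?_, ?_, ?_⟩
  · -- b₂' = b₂
    calc b₂' = b + p ∘ₗ ((E₁ * δ₁ + (E₁ * (E₂' * δ₂)) * (1 + K * (E₁ * δ₁))) ∘ₗ i) := by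
          rw [hb₂', hb₁, hA₁, hA₂', hp₁E, hi₁E]
          ext x
          simp [LinearMap.add_apply, LinearMap.comp_apply, Module.End.mul_apply,
            Module.End.one_apply, map_add, add_assoc]
      _ = b + p ∘ₗ (((E₁ * E₂') * (δ₁ + δ₂)) ∘ₗ i) := by rw [hH]
      _ = b₂ := by
          rw [hb₂, hA₂, hE12]
          ext x
          simp [LinearMap.add_apply, LinearMap.comp_apply, Module.End.mul_apply,
            Module.End.one_apply, map_add, add_assoc]
  · -- i₂' = i₂
    calc i₂' = i + (K * (E₁ * δ₁ + (E₁ * (E₂' * δ₂)) * (1 + K * (E₁ * δ₁)))) ∘ₗ i := by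
          rw [hi₂', hi₁E, hA₂', hK₁E]
          ext x
          simp [LinearMap.add_apply, LinearMap.comp_apply, Module.End.mul_apply,
            Module.End.one_apply, map_add, add_assoc]
      _ = i + (K * ((E₁ * E₂') * (δ₁ + δ₂))) ∘ₗ i := by rw [hH]
      _ = i₂ := by
          rw [hi₂, hA₂, hE12]
          ext x
          simp [LinearMap.add_apply, LinearMap.comp_apply, Module.End.mul_apply,
            Module.End.one_apply, map_add, add_assoc]
  · -- p₂' = p₂
    have h1 : p₂ = p ∘ₗ E₁₂ := by
      rw [hp₂, hA₂]
      conv_rhs => rw [hE₁₂e]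
      ext x
      simp [LinearMap.add_apply, LinearMap.comp_apply, Module.End.mul_apply,
        Module.End.one_apply, map_add, add_assoc]
    have h2 : p₂' = p ∘ₗ E₁₂ := by
      rw [hp₂', hp₁E, hA₂', hK₁E, hE12]
      conv_rhs => rw [hE₂e, hK₁E]
      ext x
      simp [LinearMap.add_apply, LinearMap.comp_apply, Module.End.mul_apply,
        Module.End.one_apply, map_add, add_assoc]
    rw [h1, h2]
  · -- K₂' = K₂
    have h1 : K₂ = K * E₁₂ := by
      rw [hK₂, hA₂]
      conv_rhs => rw [hE₁₂e]
      simp only [hm]; noncomm_ring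
    have h2 : K₂' = K * E₁₂ := by
      rw [hK₂', hA₂', hK₁E, hE12]
      conv_rhs => rw [hE₂e, hK₁E]
      simp only [hm]; noncomm_ring
    rw [h1, h2]
end

section
/- Let an SDR be given, let U be an invertible degree 0 linear map on M, set d_U := U∘d∘U⁻¹, and assume d_U − d is a small perturbation, yielding the perturbed SDR data (b′_U, i′_U, p′_U, K′_U). Then the following are equivalent: (A) there exists an invertible degree 0 map W on N with b′_U = W∘b∘W⁻¹ and p′_U = W∘p∘U⁻¹; (B) p∘U⁻¹∘K = 0 and p∘U⁻¹∘i is invertible on N. Moreover, if (A) (equivalently (B)) holds, then necessarily W = (p∘U⁻¹∘i)⁻¹. -/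
private lemma reassoc_of {R : Type*} [Semiring R] {M₁ M₂ M₃ M₄ : Type*}
    [AddCommMonoid M₁] [AddCommMonoid M₂] [AddCommMonoid M₃] [AddCommMonoid M₄]
    [Module R M₁] [Module R M₂] [Module R M₃] [Module R M₄]
    {f : M₃ →ₗ[R] M₄} {g : M₂ →ₗ[R] M₃} {h : M₂ →ₗ[R] M₄} (e : f ∘ₗ g = h)
    (x : M₁ →ₗ[R] M₂) : f ∘ₗ (g ∘ₗ x) = h ∘ₗ x := by
  rw [← LinearMap.comp_assoc, e]

private lemma reassoc₂_of {R : Type*} [Semiring R] {M₁ M₂ M₃ M₄ M₅ : Type*}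
    [AddCommMonoid M₁] [AddCommMonoid M₂] [AddCommMonoid M₃] [AddCommMonoid M₄]
    [AddCommMonoid M₅]
    [Module R M₁] [Module R M₂] [Module R M₃] [Module R M₄] [Module R M₅]
    {f : M₄ →ₗ[R] M₅} {g : M₃ →ₗ[R] M₄} {h : M₂ →ₗ[R] M₃} {e : M₂ →ₗ[R] M₅}
    (he : f ∘ₗ (g ∘ₗ h) = e)
    (x : M₁ →ₗ[R] M₂) : f ∘ₗ (g ∘ₗ (h ∘ₗ x)) = e ∘ₗ x := by
  simp only [← LinearMap.comp_assoc] at he ⊢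
  rw [he]

/-- **Perturbation by conjugation (projection case).**
Let an SDR be given, let `U` be invertible on `M` (with inverse `Uinv`), set
`d_U = U d U⁻¹`, and assume `δ = d_U - d` is a small perturbation (inverse `E` of
`1 - δK`).  With the perturbed data `b' = b + pAi`, `p' = p + pAK`, the following are
equivalent:
(A) there exists an invertible `W` on `N` with `b' = W b W⁻¹` and `p' = W ∘ p ∘ U⁻¹`;
(B) `p ∘ U⁻¹ ∘ K = 0` and `p ∘ U⁻¹ ∘ i` is invertible on `N`.
Moreover any such `W` necessarily equals `(p ∘ U⁻¹ ∘ i)⁻¹`. -/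
theorem conjugation_perturbation_projection
    {R N M : Type*} [CommRing R] [AddCommGroup N] [Module R N]
    [AddCommGroup M] [Module R M]
    -- the SDR
    (b : Module.End R N) (d : Module.End R M)
    (i : N →ₗ[R] M) (p : M →ₗ[R] N) (K : Module.End R M)
    (hb : b ∘ₗ b = 0) (hd : d ∘ₗ d = 0)
    (hdi : d ∘ₗ i = i ∘ₗ b) (hbp : b ∘ₗ p = p ∘ₗ d)
    (hpi : p ∘ₗ i = LinearMap.id)
    (hip : i ∘ₗ p = LinearMap.id + d ∘ₗ K + K ∘ₗ d)
    (hpK : p ∘ₗ K = 0) (hKi : K ∘ₗ i = 0) (hKK : K ∘ₗ K = 0)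
    -- an invertible map U on M, conjugating the differential
    (U Uinv : Module.End R M) (hU₁ : U ∘ₗ Uinv = 1) (hU₂ : Uinv ∘ₗ U = 1)
    (dU : Module.End R M) (hdU : dU = U ∘ₗ (d ∘ₗ Uinv))
    -- the conjugation difference is a small perturbation
    (δ : Module.End R M) (hδ : δ = dU - d)
    (E : Module.End R M)
    (hE₁ : (1 - δ ∘ₗ K) ∘ₗ E = 1) (hE₂ : E ∘ₗ (1 - δ ∘ₗ K) = 1)
    -- the perturbed data
    (A : Module.End R M) (hA : A = E ∘ₗ δ)
    (b' : Module.End R N) (hb' : b' = b + p ∘ₗ (A ∘ₗ i))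
    (i' : N →ₗ[R] M) (hi' : i' = i + K ∘ₗ (A ∘ₗ i))
    (p' : M →ₗ[R] N) (hp' : p' = p + p ∘ₗ (A ∘ₗ K))
    (K' : Module.End R M) (hK' : K' = K + K ∘ₗ (A ∘ₗ K)) :
    ((∃ W Winv : Module.End R N, W ∘ₗ Winv = 1 ∧ Winv ∘ₗ W = 1 ∧
        b' = W ∘ₗ (b ∘ₗ Winv) ∧ p' = W ∘ₗ (p ∘ₗ Uinv)) ↔
      (p ∘ₗ (Uinv ∘ₗ K) = 0 ∧
        ∃ V : Module.End R N, (p ∘ₗ (Uinv ∘ₗ i)) ∘ₗ V = 1 ∧ V ∘ₗ (p ∘ₗ (Uinv ∘ₗ i)) = 1)) ∧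
    (∀ W Winv : Module.End R N, W ∘ₗ Winv = 1 → Winv ∘ₗ W = 1 →
      b' = W ∘ₗ (b ∘ₗ Winv) → p' = W ∘ₗ (p ∘ₗ Uinv) →
      W ∘ₗ (p ∘ₗ (Uinv ∘ₗ i)) = 1 ∧ (p ∘ₗ (Uinv ∘ₗ i)) ∘ₗ W = 1) := by
  have hdUδ : dU = d + δ := by rw [hδ]; abel
  have hUdU : Uinv ∘ₗ dU = d ∘ₗ Uinv := by
    rw [hdU, ← LinearMap.comp_assoc (d ∘ₗ Uinv) U Uinv, hU₂, Module.End.one_eq_id,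
      LinearMap.id_comp]
  have hE₂' := hE₂
  have hE : E - A ∘ₗ K = 1 := by
    have h0 : E ∘ₗ (1 - δ ∘ₗ K) = E - (E ∘ₗ δ) ∘ₗ K := by
      rw [LinearMap.comp_sub, LinearMap.comp_assoc, Module.End.one_eq_id, LinearMap.comp_id]
    rw [h0, ← hA] at hE₂'
    exact hE₂'
  have hEE : E = 1 + A ∘ₗ K := by rw [← hE]; abel
  have hp'E : p' = p ∘ₗ E := by
    rw [hp', hEE, LinearMap.comp_add, Module.End.one_eq_id, LinearMap.comp_id,
      ← LinearMap.comp_assoc]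
  have hK'E : K' = K ∘ₗ E := by
    rw [hK', hEE, LinearMap.comp_add, Module.End.one_eq_id, LinearMap.comp_id,
      ← LinearMap.comp_assoc]
  have hKdi : K ∘ₗ (d ∘ₗ i) = 0 := by
    have h5 : (i ∘ₗ p) ∘ₗ i = (LinearMap.id + d ∘ₗ K + K ∘ₗ d) ∘ₗ i := by rw [hip]
    simp only [LinearMap.comp_assoc, LinearMap.add_comp, LinearMap.id_comp,
      hpi, reassoc_of hpi, reassoc_of hKi, hKi, LinearMap.comp_id, LinearMap.comp_zero,
      add_zero, zero_add] at h5
    rwa [left_eq_add] at h5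
  have hb'dUi : b' = p' ∘ₗ (dU ∘ₗ i) := by
    have h1 : p' ∘ₗ (dU ∘ₗ i) = p ∘ₗ (E ∘ₗ (d ∘ₗ i)) + p ∘ₗ (E ∘ₗ (δ ∘ₗ i)) := by
      rw [hp'E, hdUδ]
      simp only [LinearMap.comp_assoc, LinearMap.add_comp, LinearMap.comp_add]
    have h2 : E ∘ₗ (d ∘ₗ i) = d ∘ₗ i := by
      rw [hEE]
      simp only [LinearMap.add_comp, Module.End.one_eq_id, LinearMap.id_comp,
        LinearMap.comp_assoc, reassoc_of hKdi, hKdi, LinearMap.comp_zero, add_zero]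
    have h3 : E ∘ₗ (δ ∘ₗ i) = A ∘ₗ i := by rw [hA, LinearMap.comp_assoc]
    rw [hb', h1, h2, h3, hdi, reassoc_of hpi, LinearMap.id_comp]
  have hp'K' : p' ∘ₗ K' = 0 := by
    rw [hp', hK'E]
    simp only [LinearMap.add_comp, LinearMap.comp_assoc, reassoc_of hpK, hpK,
      reassoc_of hKK, hKK, LinearMap.zero_comp, LinearMap.comp_zero, add_zero, zero_add]
  have hp'i' : p' ∘ₗ i' = 1 := by
    rw [hp', hi', Module.End.one_eq_id]
    simp only [LinearMap.add_comp, LinearMap.comp_add, LinearMap.comp_assoc,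
      hpi, reassoc_of hpi, hpK, reassoc_of hpK, hKi, reassoc_of hKi, hKK,
      reassoc_of hKK, LinearMap.zero_comp, LinearMap.comp_zero, add_zero, zero_add]
  have core : ∀ W Winv : Module.End R N, W ∘ₗ Winv = 1 → Winv ∘ₗ W = 1 →
      p' = W ∘ₗ (p ∘ₗ Uinv) →
      p ∘ₗ (Uinv ∘ₗ K) = 0 ∧ W ∘ₗ (p ∘ₗ (Uinv ∘ₗ i)) = 1 ∧
        (p ∘ₗ (Uinv ∘ₗ i)) ∘ₗ W = 1 := by
    intro W Winv hW1 hW2 hp'W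
    have hWp : Winv ∘ₗ p' = p ∘ₗ Uinv := by
      rw [hp'W, ← LinearMap.comp_assoc (p ∘ₗ Uinv) W Winv, hW2, Module.End.one_eq_id,
        LinearMap.id_comp]
    have hK'0 : (p ∘ₗ Uinv) ∘ₗ K' = 0 := by
      rw [← hWp, LinearMap.comp_assoc, hp'K', LinearMap.comp_zero]
    have hKE : K' ∘ₗ (1 - δ ∘ₗ K) = K := by
      rw [hK'E, LinearMap.comp_assoc, hE₂, Module.End.one_eq_id, LinearMap.comp_id]
    have hpUK : p ∘ₗ (Uinv ∘ₗ K) = 0 := by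
      have h9 : ((p ∘ₗ Uinv) ∘ₗ K') ∘ₗ (1 - δ ∘ₗ K) = 0 := by
        rw [hK'0, LinearMap.zero_comp]
      rw [LinearMap.comp_assoc (1 - δ ∘ₗ K) K' (p ∘ₗ Uinv), hKE,
        LinearMap.comp_assoc K Uinv p] at h9
      exact h9
    have h6 : p ∘ₗ (Uinv ∘ₗ i') = p ∘ₗ (Uinv ∘ₗ i) := by
      rw [hi']
      simp only [LinearMap.comp_add, LinearMap.comp_assoc, reassoc₂_of hpUK,
        LinearMap.zero_comp, add_zero]
    have hWx : W ∘ₗ (p ∘ₗ (Uinv ∘ₗ i)) = 1 := by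
      rw [← h6]
      have h10 : W ∘ₗ (p ∘ₗ (Uinv ∘ₗ i')) = (W ∘ₗ (p ∘ₗ Uinv)) ∘ₗ i' := by
        simp only [LinearMap.comp_assoc]
      rw [h10, ← hp'W, hp'i']
    refine ⟨hpUK, hWx, ?_⟩
    have hxinv : p ∘ₗ (Uinv ∘ₗ i) = Winv :=
      calc p ∘ₗ (Uinv ∘ₗ i)
          = (Winv ∘ₗ W) ∘ₗ (p ∘ₗ (Uinv ∘ₗ i)) := by
            rw [hW2, Module.End.one_eq_id, LinearMap.id_comp]
        _ = Winv ∘ₗ (W ∘ₗ (p ∘ₗ (Uinv ∘ₗ i))) := LinearMap.comp_assoc _ _ _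
        _ = Winv := by rw [hWx, Module.End.one_eq_id, LinearMap.comp_id]
    rw [hxinv, hW2]
  refine ⟨⟨?_, ?_⟩, ?_⟩
  · rintro ⟨W, Winv, hW1, hW2, -, hp'W⟩
    obtain ⟨h1, h2, h3⟩ := core W Winv hW1 hW2 hp'W
    exact ⟨h1, W, h3, h2⟩
  · rintro ⟨hK0, V, hV₁, hV₂⟩
    have hUd : Uinv ∘ₗ d = d ∘ₗ Uinv - Uinv ∘ₗ δ := by
      rw [← hUdU, hdUδ, LinearMap.comp_add]; abel
    have hpUdK : p ∘ₗ (Uinv ∘ₗ (d ∘ₗ (K ∘ₗ E)))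
        = -(p ∘ₗ (Uinv ∘ₗ (δ ∘ₗ (K ∘ₗ E)))) := by
      rw [reassoc_of hUd (K ∘ₗ E)]
      simp only [LinearMap.sub_comp, LinearMap.comp_sub, LinearMap.comp_assoc]
      rw [reassoc_of hbp.symm (Uinv ∘ₗ (K ∘ₗ E)),
        LinearMap.comp_assoc (Uinv ∘ₗ (K ∘ₗ E)) p b,
        reassoc₂_of hK0 E, LinearMap.zero_comp, LinearMap.comp_zero, zero_sub]
    have hipE : p ∘ₗ (Uinv ∘ₗ ((i ∘ₗ p) ∘ₗ E)) = p ∘ₗ Uinv := by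
      rw [hip]
      simp only [LinearMap.add_comp, LinearMap.id_comp, LinearMap.comp_add,
        LinearMap.comp_assoc]
      rw [hpUdK]
      simp only [reassoc₂_of hK0, LinearMap.zero_comp, LinearMap.comp_zero, add_zero]
      have h8 : p ∘ₗ (Uinv ∘ₗ ((1 - δ ∘ₗ K) ∘ₗ E)) = p ∘ₗ Uinv := by
        rw [hE₁, Module.End.one_eq_id, LinearMap.comp_id]
      rw [← h8]
      simp only [LinearMap.sub_comp, Module.End.one_eq_id, LinearMap.id_comp,
        LinearMap.comp_sub, LinearMap.comp_assoc]
      abel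
    have hmain : (p ∘ₗ (Uinv ∘ₗ i)) ∘ₗ p' = p ∘ₗ Uinv := by
      rw [hp'E]
      have h11 : (p ∘ₗ (Uinv ∘ₗ i)) ∘ₗ (p ∘ₗ E)
          = p ∘ₗ (Uinv ∘ₗ ((i ∘ₗ p) ∘ₗ E)) := by
        simp only [LinearMap.comp_assoc]
      rw [h11, hipE]
    have hp'V : p' = V ∘ₗ (p ∘ₗ Uinv) := by
      rw [← hmain, ← LinearMap.comp_assoc p' (p ∘ₗ (Uinv ∘ₗ i)) V, hV₂,
        Module.End.one_eq_id, LinearMap.id_comp]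
    have hpb : (p ∘ₗ Uinv) ∘ₗ (dU ∘ₗ i) = b ∘ₗ (p ∘ₗ (Uinv ∘ₗ i)) := by
      have h12 : (p ∘ₗ Uinv) ∘ₗ (dU ∘ₗ i) = p ∘ₗ ((Uinv ∘ₗ dU) ∘ₗ i) := by
        simp only [LinearMap.comp_assoc]
      rw [h12, hUdU, LinearMap.comp_assoc i Uinv d,
        reassoc_of hbp.symm (Uinv ∘ₗ i), LinearMap.comp_assoc (Uinv ∘ₗ i) p b]
    have hb'V : b' = V ∘ₗ (b ∘ₗ (p ∘ₗ (Uinv ∘ₗ i))) := by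
      rw [hb'dUi, hp'V, LinearMap.comp_assoc (dU ∘ₗ i) (p ∘ₗ Uinv) V, hpb]
    exact ⟨V, p ∘ₗ (Uinv ∘ₗ i), hV₂, hV₁, hb'V, hp'V⟩
  · intro W Winv hW1 hW2 _ hp'W
    obtain ⟨-, h2, h3⟩ := core W Winv hW1 hW2 hp'W
    exact ⟨h2, h3⟩
end

section
/- Let an SDR be given, let U be an invertible degree 0 linear map on M, set d_U := U∘d∘U⁻¹, and assume d_U − d is a small perturbation, yielding the perturbed SDR data (b′_U, i′_U, p′_U, K′_U). Then the following are equivalent: (A) there exists an invertible degree 0 map W on N with b′_U = W∘b∘W⁻¹ and i′_U = U∘i∘W⁻¹; (B) K∘U∘i = 0 and p∘U∘i is invertible on N. Moreover, if (A) (equivalently (B)) holds, then necessarily W = p∘U∘i. -/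
/-- **Perturbation by conjugation (injection case).**
Let an SDR be given, let `U` be invertible on `M` (with inverse `Uinv`), set
`d_U = U d U⁻¹`, and assume `δ = d_U - d` is a small perturbation (inverse `E` of
`1 - δK`).  With the perturbed data `b' = b + pAi`, `i' = i + KAi`, the following are
equivalent:
(A) there exists an invertible `W` on `N` with `b' = W b W⁻¹` and `i' = U ∘ i ∘ W⁻¹`;
(B) `K ∘ U ∘ i = 0` and `p ∘ U ∘ i` is invertible on `N`.
Moreover any such `W` necessarily equals `p ∘ U ∘ i`. -/
theorem conjugation_perturbation_injection
    {R N M : Type*} [CommRing R] [AddCommGroup N] [Module R N]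
    [AddCommGroup M] [Module R M]
    -- the SDR
    (b : Module.End R N) (d : Module.End R M)
    (i : N →ₗ[R] M) (p : M →ₗ[R] N) (K : Module.End R M)
    (hb : b ∘ₗ b = 0) (hd : d ∘ₗ d = 0)
    (hdi : d ∘ₗ i = i ∘ₗ b) (hbp : b ∘ₗ p = p ∘ₗ d)
    (hpi : p ∘ₗ i = LinearMap.id)
    (hip : i ∘ₗ p = LinearMap.id + d ∘ₗ K + K ∘ₗ d)
    (hpK : p ∘ₗ K = 0) (hKi : K ∘ₗ i = 0) (hKK : K ∘ₗ K = 0)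
    -- an invertible map U on M, conjugating the differential
    (U Uinv : Module.End R M) (hU₁ : U ∘ₗ Uinv = 1) (hU₂ : Uinv ∘ₗ U = 1)
    (dU : Module.End R M) (hdU : dU = U ∘ₗ (d ∘ₗ Uinv))
    -- the conjugation difference is a small perturbation
    (δ : Module.End R M) (hδ : δ = dU - d)
    (E : Module.End R M)
    (hE₁ : (1 - δ ∘ₗ K) ∘ₗ E = 1) (hE₂ : E ∘ₗ (1 - δ ∘ₗ K) = 1)
    -- the perturbed data
    (A : Module.End R M) (hA : A = E ∘ₗ δ)
    (b' : Module.End R N) (hb' : b' = b + p ∘ₗ (A ∘ₗ i))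
    (i' : N →ₗ[R] M) (hi' : i' = i + K ∘ₗ (A ∘ₗ i))
    (p' : M →ₗ[R] N) (hp' : p' = p + p ∘ₗ (A ∘ₗ K))
    (K' : Module.End R M) (hK' : K' = K + K ∘ₗ (A ∘ₗ K)) :
    ((∃ W Winv : Module.End R N, W ∘ₗ Winv = 1 ∧ Winv ∘ₗ W = 1 ∧
        b' = W ∘ₗ (b ∘ₗ Winv) ∧ i' = U ∘ₗ (i ∘ₗ Winv)) ↔
      (K ∘ₗ (U ∘ₗ i) = 0 ∧
        ∃ V : Module.End R N, (p ∘ₗ (U ∘ₗ i)) ∘ₗ V = 1 ∧ V ∘ₗ (p ∘ₗ (U ∘ₗ i)) = 1)) ∧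
    (∀ W Winv : Module.End R N, W ∘ₗ Winv = 1 → Winv ∘ₗ W = 1 →
      b' = W ∘ₗ (b ∘ₗ Winv) → i' = U ∘ₗ (i ∘ₗ Winv) →
      W = p ∘ₗ (U ∘ₗ i)) := by
  -- pointwise versions of the hypotheses
  have hUx2 : ∀ m, Uinv (U m) = m := fun m => by simpa using DFunLike.congr_fun hU₂ m
  have hdix : ∀ x, d (i x) = i (b x) := fun x => by simpa using DFunLike.congr_fun hdi x
  have hpdx : ∀ m, p (d m) = b (p m) := fun m => by
    simpa using (DFunLike.congr_fun hbp m).symm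
  have hpix : ∀ x, p (i x) = x := fun x => by simpa using DFunLike.congr_fun hpi x
  have hpKx : ∀ m, p (K m) = 0 := fun m => by simpa using DFunLike.congr_fun hpK m
  have hKix : ∀ x, K (i x) = 0 := fun x => by simpa using DFunLike.congr_fun hKi x
  have hKKx : ∀ m, K (K m) = 0 := fun m => by simpa using DFunLike.congr_fun hKK m
  have hipx : ∀ m, i (p m) = m + d (K m) + K (d m) := fun m => by
    simpa using DFunLike.congr_fun hip m
  have hKdx : ∀ m, K (d m) = i (p m) - m - d (K m) := fun m => by rw [hipx m]; abel
  have hdx : ∀ m, δ m = U (d (Uinv m)) - d m := fun m => by simp [hδ, hdU]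
  have hE2x : ∀ m, E (δ (K m)) = E m - m := by
    intro m
    have h : E m - E (δ (K m)) = m := by simpa [map_sub] using DFunLike.congr_fun hE₂ m
    have h2 : E m = m + E (δ (K m)) := sub_eq_iff_eq_add.mp h
    conv_rhs => rw [h2]
    abel
  have hE1x : ∀ m, δ (K (E m)) = E m - m := by
    intro m
    have h : E m - δ (K (E m)) = m := by simpa [map_sub] using DFunLike.congr_fun hE₁ m
    have h2 : E m = m + δ (K (E m)) := sub_eq_iff_eq_add.mp h
    conv_rhs => rw [h2]
    abel
  have hi'x : ∀ x, i' x = i x + K (E (δ (i x))) := fun x => by simp [hi', hA]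
  have hpi'x : ∀ x, p (i' x) = x := fun x => by
    rw [hi'x x, map_add, hpix, hpKx, add_zero]
  have hKi'x : ∀ x, K (i' x) = 0 := fun x => by
    rw [hi'x x, map_add, hKix, hKKx, add_zero]
  have hdUix : ∀ x, δ (U (i x)) = U (i (b x)) - d (U (i x)) := fun x => by
    rw [hdx, hUx2, hdix]
  have hFGx : ∀ m, (m - K (δ m)) + K (E (δ (m - K (δ m)))) = m := by
    intro m
    have h1 : δ (m - K (δ m)) = δ m - δ (K (δ m)) := map_sub δ _ _
    rw [h1, map_sub, hE2x (δ m), sub_sub_cancel]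
    abel
  -- uniqueness of W
  have huniq : ∀ W Winv : Module.End R N, Winv ∘ₗ W = 1 →
      i' = U ∘ₗ (i ∘ₗ Winv) → W = p ∘ₗ (U ∘ₗ i) := by
    intro W Winv hW2 hiW
    have hW2x : ∀ x, Winv (W x) = x := fun x => by simpa using DFunLike.congr_fun hW2 x
    ext x
    have h := hpi'x (W x)
    rw [hiW] at h
    simp only [LinearMap.comp_apply] at h ⊢
    rw [hW2x] at h
    exact h.symm
  constructor
  · constructor
    · rintro ⟨W, Winv, hW1, hW2, hbW, hiW⟩
      have hW2x : ∀ x, Winv (W x) = x := fun x => by simpa using DFunLike.congr_fun hW2 x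
      have hWeq : W = p ∘ₗ (U ∘ₗ i) := huniq W Winv hW2 hiW
      refine ⟨?_, Winv, by rw [← hWeq]; exact hW1, by rw [← hWeq]; exact hW2⟩
      ext x
      have h := hKi'x (W x)
      rw [hiW] at h
      simp only [LinearMap.comp_apply] at h
      rw [hW2x] at h
      simpa using h
    · rintro ⟨hKUi, V, hWV, hVW⟩
      have hKUix : ∀ x, K (U (i x)) = 0 := fun x => by
        simpa using DFunLike.congr_fun hKUi x
      have hWVx : ∀ x, p (U (i (V x))) = x := fun x => by
        simpa using DFunLike.congr_fun hWV x
      have L3x : ∀ x, K (δ (U (i (V x)))) = U (i (V x)) - i x := by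
        intro x
        rw [hdUix (V x), map_sub, hKdx (U (i (V x))), hKUix, hWVx, hKUix, map_zero]
        abel
      have hiVx : ∀ x, i' x = U (i (V x)) := by
        intro x
        have hm := hFGx (U (i (V x)))
        rw [L3x x, sub_sub_cancel] at hm
        rw [hi'x x]
        exact hm
      have hb'x : ∀ x, b' x = b x + p (E (δ (i x))) := fun x => by simp [hb', hA]
      have hpdi'x : ∀ x, p (δ (i' x)) = p (E (δ (i x))) := by
        intro x
        rw [hi'x x, map_add, hE1x (δ (i x))]
        have h : δ (i x) + (E (δ (i x)) - δ (i x)) = E (δ (i x)) := by abel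
        rw [h]
      have hb'fin : ∀ x, b' x = p (U (i (b (V x)))) := by
        intro x
        rw [hb'x x, ← hpdi'x x, hiVx x, hdUix (V x), map_sub, hpdx, hWVx]
        abel
      refine ⟨p ∘ₗ (U ∘ₗ i), V, hWV, hVW, ?_, ?_⟩
      · ext x
        simp only [LinearMap.comp_apply]
        exact hb'fin x
      · ext x
        simp only [LinearMap.comp_apply]
        exact hiVx x
  · intro W Winv hW1 hW2 hbW hiW
    exact huniq W Winv hW2 hiW
end

section
/- Given a semifull algebra contraction, the following identities hold for all n ≥ 1 and all b₁, b₂, …, bₙ ∈ ℬ: 𝔭(𝔦(b₁)𝔦(b₂)⋯𝔦(bₙ)) = b₁b₂⋯bₙ and 𝔎(𝔦(b₁)𝔦(b₂)⋯𝔦(bₙ)) = 0. -/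
/-- Given a semifull algebra contraction `(ℬ, D_ℬ) ⇄ (𝒜, D_𝒜)` with injection `𝔦`,
projection `𝔭` and homotopy `𝔎`, for every `n ≥ 1` and `b₁, …, bₙ ∈ ℬ` (encoded as a
nonempty list `l`) one has `𝔭(𝔦(b₁)⋯𝔦(bₙ)) = b₁⋯bₙ` and `𝔎(𝔦(b₁)⋯𝔦(bₙ)) = 0`. -/
theorem semifull_contraction_products
    {k A B : Type*} [Field k] [CommRing A] [Algebra k A] [CommRing B] [Algebra k B]
    (DA : Module.End k A) (DB : Module.End k B)
    (i : B →ₗ[k] A) (p : A →ₗ[k] B) (K : Module.End k A)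
    -- cochain complexes and unit conditions
    (hDA : DA ∘ₗ DA = 0) (hDB : DB ∘ₗ DB = 0)
    (hDA1 : DA 1 = 0) (hDB1 : DB 1 = 0)
    -- SDR conditions
    (hdi : DA ∘ₗ i = i ∘ₗ DB) (hbp : DB ∘ₗ p = p ∘ₗ DA)
    (hpi : p ∘ₗ i = LinearMap.id)
    (hip : i ∘ₗ p = LinearMap.id + DA ∘ₗ K + K ∘ₗ DA)
    (hpK : p ∘ₗ K = 0) (hKi : K ∘ₗ i = 0) (hKK : K ∘ₗ K = 0)
    -- semifull algebra contraction conditions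
    (hKKK : ∀ a₁ a₂ : A, K (K a₁ * K a₂) = 0)
    (hKKi : ∀ (a₁ : A) (b₂ : B), K (K a₁ * i b₂) = 0)
    (hKii : ∀ b₁ b₂ : B, K (i b₁ * i b₂) = 0)
    (hK1 : K 1 = 0)
    (hpKK : ∀ a₁ a₂ : A, p (K a₁ * K a₂) = 0)
    (hpKi : ∀ (a₁ : A) (b₂ : B), p (K a₁ * i b₂) = 0)
    (hpii : ∀ b₁ b₂ : B, p (i b₁ * i b₂) = b₁ * b₂)
    (hp1 : p 1 = 1) :
    ∀ l : List B, l ≠ [] →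
      p ((l.map ⇑i).prod) = l.prod ∧ K ((l.map ⇑i).prod) = 0 := by
  have hipx : ∀ x : A, i (p x) = x + DA (K x) + K (DA x) := by
    intro x
    have := LinearMap.congr_fun hip x
    simpa using this
  have lem1 : ∀ (b P : B), i b * i P = i (b * P) - K (DA (i b * i P)) := by
    intro b P
    have h := hipx (i b * i P)
    rw [hpii, hKii] at h
    simp only [map_zero, add_zero] at h
    linear_combination (norm := module) -h
  have lem2 : ∀ (b : B) (a : A), i b * K a = - K (DA (i b * K a)) := by
    intro b a
    have h := hipx (i b * K a)
    rw [mul_comm (i b)] at h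
    rw [hpKi, hKKi] at h
    simp only [map_zero, add_zero, zero_add] at h
    rw [mul_comm (K a)] at h
    linear_combination (norm := module) -h
  have key : ∀ l : List B, l ≠ [] → ∃ a : A, (l.map ⇑i).prod = i l.prod + K a := by
    intro l hl
    induction l with
    | nil => exact absurd rfl hl
    | cons b t ih =>
      cases t with
      | nil => exact ⟨0, by simp⟩
      | cons b' t' =>
        obtain ⟨a, ha⟩ := ih (by simp)
        simp only [List.map_cons, List.prod_cons] at ha ⊢
        refine ⟨-DA (i b * i (b' * t'.prod)) - DA (i b * K a), ?_⟩
        rw [ha, mul_add, map_sub, map_neg]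
        linear_combination lem1 b (b' * t'.prod) + lem2 b a
  intro l hl
  obtain ⟨a, ha⟩ := key l hl
  rw [ha]
  constructor
  · rw [map_add]
    have h1 := LinearMap.congr_fun hpi l.prod
    have h2 := LinearMap.congr_fun hpK a
    simp only [LinearMap.comp_apply, LinearMap.id_apply, LinearMap.zero_apply] at h1 h2
    rw [h1, h2, add_zero]
  · rw [map_add]
    have h1 := LinearMap.congr_fun hKi l.prod
    have h2 := LinearMap.congr_fun hKK a
    simp only [LinearMap.comp_apply, LinearMap.zero_apply, Module.End.mul_apply] at h1 h2
    rw [h1, h2, add_zero]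
end

section
/- Given a semifull algebra contraction, if it is perturbed (via the homological perturbation lemma) by a small perturbation δ_𝒜 of D_𝒜 satisfying δ_𝒜(1_𝒜) = 0, then the resulting perturbed SDR is again a semifull algebra contraction: the perturbed maps 𝔭₁, 𝔦₁, 𝔎₁ and differentials satisfy all the defining identities of a semifull algebra contraction. -/
/-- Perturbing a semifull algebra contraction by a small perturbation `δ` of `D_𝒜` with
`δ(1) = 0` (via the homological perturbation lemma) yields again a semifull algebra
contraction: the perturbed maps `𝔭₁, 𝔦₁, 𝔎₁` and differentials satisfy all the defining
identities of a semifull algebra contraction. -/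
theorem semifull_contraction_perturbation
    {k A B : Type*} [Field k] [CommRing A] [Algebra k A] [CommRing B] [Algebra k B]
    (DA : Module.End k A) (DB : Module.End k B)
    (i : B →ₗ[k] A) (p : A →ₗ[k] B) (K : Module.End k A)
    -- cochain complexes and unit conditions
    (hDA : DA ∘ₗ DA = 0) (hDB : DB ∘ₗ DB = 0)
    (hDA1 : DA 1 = 0) (hDB1 : DB 1 = 0)
    -- SDR conditions
    (hdi : DA ∘ₗ i = i ∘ₗ DB) (hbp : DB ∘ₗ p = p ∘ₗ DA)
    (hpi : p ∘ₗ i = LinearMap.id)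
    (hip : i ∘ₗ p = LinearMap.id + DA ∘ₗ K + K ∘ₗ DA)
    (hpK : p ∘ₗ K = 0) (hKi : K ∘ₗ i = 0) (hKK : K ∘ₗ K = 0)
    -- semifull algebra contraction conditions
    (hKKK : ∀ a₁ a₂ : A, K (K a₁ * K a₂) = 0)
    (hKKi : ∀ (a₁ : A) (b₂ : B), K (K a₁ * i b₂) = 0)
    (hKii : ∀ b₁ b₂ : B, K (i b₁ * i b₂) = 0)
    (hK1 : K 1 = 0)
    (hpKK : ∀ a₁ a₂ : A, p (K a₁ * K a₂) = 0)
    (hpKi : ∀ (a₁ : A) (b₂ : B), p (K a₁ * i b₂) = 0)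
    (hpii : ∀ b₁ b₂ : B, p (i b₁ * i b₂) = b₁ * b₂)
    (hp1 : p 1 = 1)
    -- a small perturbation δ of D_𝒜 with δ(1) = 0
    (δ : Module.End k A) (hδ1 : δ 1 = 0)
    (hδ : (DA + δ) ∘ₗ (DA + δ) = 0)
    (E : Module.End k A)
    (hE₁ : (1 - δ ∘ₗ K) ∘ₗ E = 1) (hE₂ : E ∘ₗ (1 - δ ∘ₗ K) = 1)
    -- the perturbed data
    (A' : Module.End k A) (hA' : A' = E ∘ₗ δ)
    (DB₁ : Module.End k B) (hDB₁ : DB₁ = DB + p ∘ₗ (A' ∘ₗ i))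
    (i₁ : B →ₗ[k] A) (hi₁ : i₁ = i + K ∘ₗ (A' ∘ₗ i))
    (p₁ : A →ₗ[k] B) (hp₁ : p₁ = p + p ∘ₗ (A' ∘ₗ K))
    (K₁ : Module.End k A) (hK₁ : K₁ = K + K ∘ₗ (A' ∘ₗ K))
    (DA₁ : Module.End k A) (hDA₁ : DA₁ = DA + δ) :
    -- the perturbed data is again a semifull algebra contraction
    DA₁ ∘ₗ DA₁ = 0 ∧ DB₁ ∘ₗ DB₁ = 0 ∧
    DA₁ 1 = 0 ∧ DB₁ 1 = 0 ∧
    DA₁ ∘ₗ i₁ = i₁ ∘ₗ DB₁ ∧ DB₁ ∘ₗ p₁ = p₁ ∘ₗ DA₁ ∧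
    p₁ ∘ₗ i₁ = LinearMap.id ∧
    i₁ ∘ₗ p₁ = LinearMap.id + DA₁ ∘ₗ K₁ + K₁ ∘ₗ DA₁ ∧
    p₁ ∘ₗ K₁ = 0 ∧ K₁ ∘ₗ i₁ = 0 ∧ K₁ ∘ₗ K₁ = 0 ∧
    (∀ a₁ a₂ : A, K₁ (K₁ a₁ * K₁ a₂) = 0) ∧
    (∀ (a₁ : A) (b₂ : B), K₁ (K₁ a₁ * i₁ b₂) = 0) ∧
    (∀ b₁ b₂ : B, K₁ (i₁ b₁ * i₁ b₂) = 0) ∧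
    K₁ 1 = 0 ∧
    (∀ a₁ a₂ : A, p₁ (K₁ a₁ * K₁ a₂) = 0) ∧
    (∀ (a₁ : A) (b₂ : B), p₁ (K₁ a₁ * i₁ b₂) = 0) ∧
    (∀ b₁ b₂ : B, p₁ (i₁ b₁ * i₁ b₂) = b₁ * b₂) ∧
    p₁ 1 = 1 := by
  -- elementwise versions of the hypotheses
  have hDA' : ∀ a : A, DA (DA a) = 0 := fun a => by
    simpa using LinearMap.congr_fun hDA a
  have hDB' : ∀ b : B, DB (DB b) = 0 := fun b => by
    simpa using LinearMap.congr_fun hDB b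
  have hdi' : ∀ b : B, i (DB b) = DA (i b) := fun b => by
    simpa using (LinearMap.congr_fun hdi b).symm
  have hbp' : ∀ a : A, DB (p a) = p (DA a) := fun a => by
    simpa using LinearMap.congr_fun hbp a
  have hpi' : ∀ b : B, p (i b) = b := fun b => by
    simpa using LinearMap.congr_fun hpi b
  have hip' : ∀ a : A, i (p a) = a + DA (K a) + K (DA a) := fun a => by
    simpa using LinearMap.congr_fun hip a
  have hpK' : ∀ a : A, p (K a) = 0 := fun a => by
    simpa using LinearMap.congr_fun hpK a
  have hKi' : ∀ b : B, K (i b) = 0 := fun b => by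
    simpa using LinearMap.congr_fun hKi b
  have hKK' : ∀ a : A, K (K a) = 0 := fun a => by
    simpa using LinearMap.congr_fun hKK a
  have htD : ∀ a : A, δ (DA a) = -DA (δ a) - δ (δ a) := fun a => by
    have h := LinearMap.congr_fun hδ a
    simp only [LinearMap.comp_apply, LinearMap.add_apply, LinearMap.zero_apply,
      map_add] at h
    rw [hDA'] at h
    linear_combination h
  have e1 : ∀ a : A, δ (K (E a)) = E a - a := fun a => by
    have h := LinearMap.congr_fun hE₁ a
    simp only [LinearMap.comp_apply, LinearMap.sub_apply, Module.End.one_apply] at h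
    linear_combination -h
  have e2 : ∀ a : A, E (δ (K a)) = E a - a := fun a => by
    have h := LinearMap.congr_fun hE₂ a
    simp only [LinearMap.comp_apply, LinearMap.sub_apply, Module.End.one_apply,
      map_sub] at h
    linear_combination -h
  -- if `K w = 0` then `E` fixes `w`
  have hKE0 : ∀ w : A, K w = 0 → K (E w) = 0 := by
    intro w hw
    have h1 : E w = w + δ (K (E w)) := by linear_combination -e1 w
    have hv : K (E w) = K (δ (K (E w))) := by
      conv_lhs => rw [h1]
      rw [map_add, hw, zero_add]
    have h2 : E (δ (K (δ (K (E w))))) = E (δ (K (E w))) - δ (K (E w)) := e2 _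
    rw [← hv] at h2
    have h3 : δ (K (E w)) = 0 := by linear_combination h2
    rw [hv, h3, map_zero]
  have hEfix : ∀ w : A, K w = 0 → E w = w := by
    intro w hw
    have h1 : δ (K (E w)) = E w - w := e1 w
    rw [hKE0 w hw, map_zero] at h1
    linear_combination -h1
  -- pointwise descriptions of the perturbed maps
  have hK₁E : ∀ x : A, K₁ x = K (E x) := by
    intro x
    rw [hK₁, hA']
    simp only [LinearMap.add_apply, LinearMap.comp_apply, e2, map_sub]
    ring
  have hp₁E : ∀ x : A, p₁ x = p (E x) := by
    intro x
    rw [hp₁, hA']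
    simp only [LinearMap.add_apply, LinearMap.comp_apply, e2, map_sub]
    ring
  have hi₁' : ∀ b : B, i₁ b = i b + K (E (δ (i b))) := by
    intro b
    rw [hi₁, hA']
    simp only [LinearMap.add_apply, LinearMap.comp_apply]
  have hDB₁' : ∀ b : B, DB₁ b = DB b + p (E (δ (i b))) := by
    intro b
    rw [hDB₁, hA']
    simp only [LinearMap.add_apply, LinearMap.comp_apply]
  have hDA₁' : ∀ a : A, DA₁ a = DA a + δ a := by
    intro a
    rw [hDA₁]
    simp only [LinearMap.add_apply]
  have hi1 : i 1 = 1 := by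
    have h := hip' 1
    rw [hp1, hK1, hDA1, map_zero, map_zero, add_zero, add_zero] at h
    exact h
  -- `K (i₁ b) = 0`
  have hKi₁ : ∀ b : B, K (i₁ b) = 0 := by
    intro b
    rw [hi₁', map_add, hKi', hKK', add_zero]
  refine ⟨?_, ?_, ?_, ?_, ?_, ?_, ?_, ?_, ?_, ?_, ?_, ?_, ?_, ?_, ?_, ?_, ?_, ?_, ?_⟩
  · rw [hDA₁]; exact hδ
  · -- DB₁ ∘ DB₁ = 0
    ext b
    simp only [LinearMap.comp_apply, LinearMap.zero_apply, hDB₁', map_add,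
      hbp', hdi', hip', htD, e1, e2, hDB', hDA', hKK', hKi', hpK', hpi',
      map_sub, map_neg, map_zero]
    ring
  · rw [hDA₁]; simp [hDA1, hδ1]
  · rw [hDB₁' 1, hi1, hδ1, map_zero, map_zero, hDB1, add_zero]
  · -- DA₁ ∘ i₁ = i₁ ∘ DB₁
    ext b
    simp only [LinearMap.comp_apply, hDA₁', hi₁', hDB₁', map_add,
      hbp', hdi', hip', htD, e1, e2, hDB', hDA', hKK', hKi', hpK', hpi',
      map_sub, map_neg, map_zero]
    ring
  · -- DB₁ ∘ p₁ = p₁ ∘ DA₁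
    ext a
    simp only [LinearMap.comp_apply, hDB₁', hp₁E, hDA₁', map_add,
      hbp', hdi', hip', htD, e1, e2, hDB', hDA', hKK', hKi', hpK', hpi',
      map_sub, map_neg, map_zero]
    ring
  · -- p₁ ∘ i₁ = id
    ext b
    rw [LinearMap.comp_apply, LinearMap.id_apply, hp₁E, hEfix _ (hKi₁ b), hi₁',
      map_add, hpi', hpK', add_zero]
  · -- i₁ ∘ p₁ = id + DA₁ ∘ K₁ + K₁ ∘ DA₁
    ext a
    simp only [LinearMap.comp_apply, LinearMap.add_apply, LinearMap.id_apply,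
      hi₁', hp₁E, hDA₁', hK₁E, map_add,
      hbp', hdi', hip', htD, e1, e2, hDB', hDA', hKK', hKi', hpK', hpi',
      map_sub, map_neg, map_zero]
    ring
  · -- p₁ ∘ K₁ = 0
    ext a
    rw [LinearMap.comp_apply, LinearMap.zero_apply, hp₁E, hK₁E,
      hEfix _ (hKK' (E a)), hpK']
  · -- K₁ ∘ i₁ = 0
    ext b
    rw [LinearMap.comp_apply, LinearMap.zero_apply, hK₁E, hEfix _ (hKi₁ b), hKi₁]
  · -- K₁ ∘ K₁ = 0
    ext a
    rw [LinearMap.comp_apply, LinearMap.zero_apply, hK₁E, hK₁E,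
      hEfix _ (hKK' (E a)), hKK']
  · -- K₁ (K₁ a₁ * K₁ a₂) = 0
    intro a₁ a₂
    simp only [hK₁E]
    rw [hEfix _ (hKKK _ _)]
    exact hKKK _ _
  · -- K₁ (K₁ a₁ * i₁ b₂) = 0
    intro a₁ b₂
    simp only [hK₁E, hi₁']
    have hw : K (K (E a₁) * (i b₂ + K (E (δ (i b₂))))) = 0 := by
      rw [mul_add, map_add, hKKi, hKKK, add_zero]
    rw [hEfix _ hw]
    exact hw
  · -- K₁ (i₁ b₁ * i₁ b₂) = 0
    intro b₁ b₂
    simp only [hK₁E, hi₁']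
    have hw : K ((i b₁ + K (E (δ (i b₁)))) * (i b₂ + K (E (δ (i b₂))))) = 0 := by
      rw [add_mul, mul_add, mul_add, map_add, map_add, map_add, hKii,
        mul_comm (i b₁), hKKi, hKKi, hKKK]
      ring
    rw [hEfix _ hw]
    exact hw
  · rw [hK₁E, hEfix _ hK1, hK1]
  · -- p₁ (K₁ a₁ * K₁ a₂) = 0
    intro a₁ a₂
    simp only [hK₁E, hp₁E]
    rw [hEfix _ (hKKK _ _)]
    exact hpKK _ _
  · -- p₁ (K₁ a₁ * i₁ b₂) = 0
    intro a₁ b₂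
    simp only [hK₁E, hp₁E, hi₁']
    have hw : K (K (E a₁) * (i b₂ + K (E (δ (i b₂))))) = 0 := by
      rw [mul_add, map_add, hKKi, hKKK, add_zero]
    rw [hEfix _ hw, mul_add, map_add, hpKi, hpKK, add_zero]
  · -- p₁ (i₁ b₁ * i₁ b₂) = b₁ * b₂
    intro b₁ b₂
    simp only [hp₁E, hi₁']
    have hw : K ((i b₁ + K (E (δ (i b₁)))) * (i b₂ + K (E (δ (i b₂))))) = 0 := by
      rw [add_mul, mul_add, mul_add, map_add, map_add, map_add, hKii,
        mul_comm (i b₁), hKKi, hKKi, hKKK]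
      ring
    rw [hEfix _ hw, add_mul, mul_add, mul_add, map_add, map_add, map_add, hpii,
      mul_comm (i b₁), hpKi, hpKi, hpKK]
    ring
  · rw [hp₁E, hEfix _ hK1, hp1]
end
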